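/- arXiv:2109.08709 — 6 statements merged into one kernel-verified Lean document; each statement's English description precedes it below -/
import Mathlib

section
/- Under Assumption 2.1, for each index (t,a) there exists a unique square-summable family of coefficients β_{(τ,b)→(t,a)} with β_{(t,a)→(t,a)} = 0 such that the orthogonal projection of x_{(t,a)} onto the closed linear span of {x_{(τ,b)} : (τ,b) ≠ (t,a)} equals the H-convergent sum Σ_{(τ,b)} β_{(τ,b)→(t,a)} x_{(τ,b)}; moreover, writing σ²_{a,t} for the squared distance from x_{(t,a)} to that span (which satisfies σ²_{a,t} ≥ λ_inf), the inverse Gram operator satisfies [D]_{(t,a),(t,a)} = 1/σ²_{a,t} and [D]_{(t,a),(τ,b)} = −β_{(τ,b)→(t,a)}/σ²_{a,t} for all (τ,b) ≠ (t,a). -/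
set_option maxHeartbeats 1000000

open scoped InnerProductSpace ENNReal

noncomputable section

abbrev Ell2p (p : ℕ) : Type := lp (fun _ : ℤ × Fin p => ℝ) 2

noncomputable def e2p (p : ℕ) (i : ℤ × Fin p) : Ell2p p := lp.single 2 i 1

abbrev Ell2Z : Type := lp (fun _ : ℤ => ℝ) 2

noncomputable def eZ (t : ℤ) : Ell2Z := lp.single 2 t 1

def gramQuadSet {H : Type*} [NormedAddCommGroup H] [InnerProductSpace ℝ H]
    {p : ℕ} (x : ℤ × Fin p → H) : Set ℝ :=
  {r : ℝ | ∃ v : (ℤ × Fin p) →₀ ℝ,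
      (∑ i ∈ v.support, (v i) ^ 2) = 1 ∧ ‖∑ i ∈ v.support, v i • x i‖ ^ 2 = r}

def IsResidual {H : Type*} [NormedAddCommGroup H] [InnerProductSpace ℝ H]
    (S : Set H) (y r : H) : Prop :=
  (y - r) ∈ (Submodule.span ℝ S).topologicalClosure ∧ ∀ z ∈ S, ⟪r, z⟫_ℝ = 0

lemma coord_eq {p : ℕ} (u : Ell2p p) (j : ℤ × Fin p) : ⟪u, e2p p j⟫_ℝ = u j := by
  simp [e2p, lp.inner_single_right, RCLike.inner_apply]

lemma e_apply {p : ℕ} (j k : ℤ × Fin p) : (e2p p j) k = if k = j then (1:ℝ) else 0 := by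
  simp [e2p, lp.single_apply, Pi.single_apply]

lemma e_inner {p : ℕ} (j k : ℤ × Fin p) : ⟪e2p p j, e2p p k⟫_ℝ = if j = k then (1:ℝ) else 0 := by
  rw [coord_eq, e_apply]; simp [eq_comm]

lemma single_eq_smul {p : ℕ} (k : ℤ × Fin p) (c : ℝ) :
    lp.single (E := fun _ : ℤ × Fin p => ℝ) 2 k c = c • e2p p k := by
  rw [e2p, ← lp.single_smul]; norm_num

lemma hasSum_coords {p : ℕ} (u : Ell2p p) :
    HasSum (fun k : ℤ × Fin p => u k • e2p p k) u := by
  have := lp.hasSum_single (E := fun _ : ℤ × Fin p => ℝ) (p := 2) (by norm_num) u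
  simpa [single_eq_smul] using this

lemma memℓp_of_sq_summable {p : ℕ} (f : ℤ × Fin p → ℝ)
    (hf : Summable fun j => (f j) ^ 2) : Memℓp f 2 := by
  apply memℓp_gen
  have : ∀ j, ‖f j‖ ^ (2 : ℝ≥0∞).toReal = (f j) ^ 2 := by
    intro j
    have : ((2 : ℝ≥0∞)).toReal = (2:ℝ) := by norm_num
    rw [this, Real.rpow_two, Real.norm_eq_abs, sq_abs]
  simpa [this] using hf

lemma sq_summable_of_memℓp {p : ℕ} (f : Ell2p p) :
    Summable fun j => (f j) ^ 2 := by
  have := Memℓp.summable (E := fun _ : ℤ × Fin p => ℝ) (p := 2) (by norm_num) (lp.memℓp f)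
  have h : ∀ j, ‖f j‖ ^ (2 : ℝ≥0∞).toReal = (f j) ^ 2 := by
    intro j
    have h2 : ((2 : ℝ≥0∞)).toReal = (2:ℝ) := by norm_num
    rw [h2, Real.rpow_two, Real.norm_eq_abs, sq_abs]
  simpa [h] using this

-- norm of a finite combination of basis vectors
lemma norm_comb_sq {p : ℕ} (c : ℤ × Fin p → ℝ) (F : Finset (ℤ × Fin p)) :
    ‖∑ j ∈ F, c j • e2p p j‖ ^ 2 = ∑ j ∈ F, (c j) ^ 2 := by
  rw [← real_inner_self_eq_norm_sq]
  simp only [sum_inner, inner_sum, real_inner_smul_left, real_inner_smul_right, e_inner,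
    mul_ite, mul_one, mul_zero, Finset.sum_ite_eq]
  exact Finset.sum_congr rfl fun j hj => by simp [hj, sq]

/-- Projection coefficients and the entries of the inverse Gram operator. -/
theorem statement_2
    {H : Type*} [NormedAddCommGroup H] [InnerProductSpace ℝ H] [CompleteSpace H]
    (p : ℕ) (hp : 1 ≤ p) (x : ℤ × Fin p → H)
    (lamInf lamSup : ℝ)
    (hInf : IsGLB (gramQuadSet x) lamInf)
    (hSup : IsLUB (gramQuadSet x) lamSup)
    (hpos : 0 < lamInf)
    (C : Ell2p p →L[ℝ] Ell2p p)
    (hC : ∀ i j : ℤ × Fin p, ⟪C (e2p p j), e2p p i⟫_ℝ = ⟪x i, x j⟫_ℝ)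
    (hCsa : ∀ u v : Ell2p p, ⟪C u, v⟫_ℝ = ⟪u, C v⟫_ℝ)
    (hlo : ∀ v : Ell2p p, lamInf * ‖v‖ ^ 2 ≤ ⟪C v, v⟫_ℝ)
    (hhi : ∀ v : Ell2p p, ⟪C v, v⟫_ℝ ≤ lamSup * ‖v‖ ^ 2)
    (D : Ell2p p →L[ℝ] Ell2p p)
    (hCD : C.comp D = ContinuousLinearMap.id ℝ (Ell2p p))
    (hDC : D.comp C = ContinuousLinearMap.id ℝ (Ell2p p)) :
    ∀ i : ℤ × Fin p, ∃ (β : (ℤ × Fin p) → ℝ) (y : H),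
      β i = 0 ∧
      Summable (fun j : ℤ × Fin p => (β j) ^ 2) ∧
      HasSum (fun j : ℤ × Fin p => β j • x j) y ∧
      y ∈ (Submodule.span ℝ (x '' {j : ℤ × Fin p | j ≠ i})).topologicalClosure ∧
      (∀ j : ℤ × Fin p, j ≠ i → ⟪x i - y, x j⟫_ℝ = 0) ∧
      (∀ β' : (ℤ × Fin p) → ℝ, β' i = 0 →
        Summable (fun j : ℤ × Fin p => (β' j) ^ 2) →
        HasSum (fun j : ℤ × Fin p => β' j • x j) y → β' = β) ∧
      lamInf ≤ ‖x i - y‖ ^ 2 ∧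
      ⟪D (e2p p i), e2p p i⟫_ℝ = (‖x i - y‖ ^ 2)⁻¹ ∧
      (∀ j : ℤ × Fin p, j ≠ i →
        ⟪D (e2p p j), e2p p i⟫_ℝ = -(β j / ‖x i - y‖ ^ 2)) := by
  intro i
  classical
  have key : ∀ j k : ℤ × Fin p, ⟪C (e2p p j), e2p p k⟫_ℝ = ⟪x j, x k⟫_ℝ := fun j k => by
    rw [hC k j]; exact real_inner_comm _ _
  have quad : ∀ (c : ℤ × Fin p → ℝ) (F : Finset (ℤ × Fin p)),
      ‖∑ j ∈ F, c j • x j‖ ^ 2 = ⟪C (∑ j ∈ F, c j • e2p p j), ∑ k ∈ F, c k • e2p p k⟫_ℝ := by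
    intro c F
    rw [← real_inner_self_eq_norm_sq]
    simp only [map_sum, map_smul, sum_inner, inner_sum, real_inner_smul_left,
      real_inner_smul_right, key]
  have he : ‖e2p p i‖ = 1 := by
    rw [e2p]
    simpa using lp.norm_single (E := fun _ : ℤ × Fin p => ℝ) (p := 2) (by norm_num)
      (fun _ => (1:ℝ)) i
  have hsup0 : 0 < lamSup := by
    have h1 := hlo (e2p p i)
    have h2 := hhi (e2p p i)
    rw [he] at h1 h2
    nlinarith
  set d : Ell2p p := D (e2p p i) with hd
  have hCd : C d = e2p p i := by
    have := congrArg (fun T => T (e2p p i)) hCD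
    simpa using this
  have hdne : d ≠ 0 := by
    intro h
    have h1 : e2p p i ≠ 0 := by
      intro h0
      have := congrArg (fun u : Ell2p p => (u : (ℤ × Fin p) → ℝ) i) h0
      simp [e_apply] at this
    exact h1 (by rw [← hCd, h, map_zero])
  have hCdd : ⟪C d, d⟫_ℝ = d i := by rw [hCd, real_inner_comm, coord_eq]
  have hdn : 0 < ‖d‖ := norm_pos_iff.mpr hdne
  have hdi : 0 < d i := lt_of_lt_of_le (by positivity) (hCdd ▸ hlo d)
  have hd2 : Summable fun j => (d j : ℝ) ^ 2 := sq_summable_of_memℓp d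
  -- summability of the series ∑ d j • x j
  have hsummable : Summable fun j : ℤ × Fin p => d j • x j := by
    rw [summable_iff_vanishing_norm]
    intro ε hε
    obtain ⟨s0, hs0⟩ := summable_iff_vanishing_norm.mp hd2 (ε ^ 2 / lamSup) (by positivity)
    refine ⟨s0, fun t ht => ?_⟩
    have h1 : ‖∑ j ∈ t, d j • x j‖ ^ 2 ≤ lamSup * ∑ j ∈ t, (d j : ℝ) ^ 2 := by
      rw [quad (fun j => d j) t]
      calc ⟪C (∑ j ∈ t, d j • e2p p j), ∑ k ∈ t, d k • e2p p k⟫_ℝ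
          ≤ lamSup * ‖∑ j ∈ t, d j • e2p p j‖ ^ 2 := hhi _
        _ = lamSup * ∑ j ∈ t, (d j : ℝ) ^ 2 := by rw [norm_comb_sq]
    have h2 := hs0 t ht
    have h3 : ∑ j ∈ t, (d j : ℝ) ^ 2 < ε ^ 2 / lamSup := by
      have hnn : 0 ≤ ∑ j ∈ t, (d j : ℝ) ^ 2 := Finset.sum_nonneg fun j _ => sq_nonneg _
      rwa [Real.norm_eq_abs, abs_of_nonneg hnn] at h2
    have h4 : ‖∑ j ∈ t, d j • x j‖ ^ 2 < ε ^ 2 := by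
      calc ‖∑ j ∈ t, d j • x j‖ ^ 2 ≤ lamSup * ∑ j ∈ t, (d j : ℝ) ^ 2 := h1
        _ < lamSup * (ε ^ 2 / lamSup) := by
            exact (mul_lt_mul_iff_right₀ hsup0).mpr h3
        _ = ε ^ 2 := by field_simp
    nlinarith [norm_nonneg (∑ j ∈ t, d j • x j)]
  obtain ⟨s, hs⟩ := hsummable
  have hsx : ∀ j : ℤ × Fin p, ⟪s, x j⟫_ℝ = if j = i then 1 else 0 := by
    intro j
    have h1 : HasSum (fun k => (d k : ℝ) * ⟪x j, x k⟫_ℝ) ⟪x j, s⟫_ℝ := by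
      have := hs.mapL (innerSL ℝ (x j))
      simpa [real_inner_smul_right] using this
    have h2 : HasSum (fun k => (d k : ℝ) * ⟪x j, x k⟫_ℝ) ⟪C (e2p p j), d⟫_ℝ := by
      have := (hasSum_coords d).mapL (innerSL ℝ (C (e2p p j)))
      simpa [real_inner_smul_right, key] using this
    have h3 : ⟪C (e2p p j), d⟫_ℝ = if j = i then 1 else 0 := by
      rw [hCsa, hCd, e_inner]
    rw [real_inner_comm, h1.unique h2, h3]
  have hss : ⟪s, s⟫_ℝ = d i := by
    have h1 : HasSum (fun k => (d k : ℝ) * ⟪s, x k⟫_ℝ) ⟪s, s⟫_ℝ := by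
      simpa [real_inner_smul_right] using hs.mapL (innerSL ℝ s)
    have h2 : HasSum (fun k => (d k : ℝ) * ⟪s, x k⟫_ℝ) (d i) := by
      have hfun : (fun k => (d k : ℝ) * ⟪s, x k⟫_ℝ) = fun k => if k = i then (d i : ℝ) else 0 := by
        funext k
        rw [hsx]
        split_ifs with h
        · rw [h]; ring
        · ring
      rw [hfun]
      exact hasSum_ite_eq i (d i)
    exact h1.unique h2
  set β : (ℤ × Fin p) → ℝ := fun j => if j = i then 0 else -(d j / d i) with hβ
  set y : H := x i - (d i : ℝ)⁻¹ • s with hy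
  have hxiy : x i - y = (d i : ℝ)⁻¹ • s := by rw [hy]; abel
  have hsn : ‖s‖ ^ 2 = d i := by rw [← real_inner_self_eq_norm_sq, hss]
  have hσ : ‖x i - y‖ ^ 2 = (d i : ℝ)⁻¹ := by
    rw [hxiy, norm_smul, mul_pow, hsn, Real.norm_eq_abs, abs_of_pos (inv_pos.mpr hdi), sq]
    field_simp
  have hβsum : Summable fun j : ℤ × Fin p => (β j) ^ 2 := by
    refine Summable.of_nonneg_of_le (fun j => sq_nonneg _) (fun j => ?_)
      (hd2.mul_right ((d i : ℝ)⁻¹ ^ 2))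
    by_cases h : j = i
    · simp only [hβ, if_pos h]
      have h0 : ((0:ℝ)) ^ 2 = 0 := by norm_num
      rw [h0]
      positivity
    · simp only [hβ, if_neg h, neg_sq]
      exact le_of_eq (by field_simp)
  have hβhas : HasSum (fun j : ℤ × Fin p => β j • x j) y := by
    have hfun : (fun j : ℤ × Fin p => β j • x j)
        = fun j => (-(d i : ℝ)⁻¹) • ((d j : ℝ) • x j) + (if j = i then x i else 0) := by
      funext j
      by_cases h : j = i
      · subst h
        rw [if_pos rfl, smul_smul]
        simp only [hβ, if_pos rfl, zero_smul]
        rw [show -(d j : ℝ)⁻¹ * d j = -1 by field_simp]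
        simp
      · rw [if_neg h, add_zero, smul_smul]
        simp only [hβ, if_neg h]
        congr 1
        field_simp
    rw [hfun]
    have h := (hs.const_smul (-(d i : ℝ)⁻¹)).add (hasSum_ite_eq i (x i))
    convert h using 1
    rw [hy]
    module
  have hclos : y ∈ (Submodule.span ℝ (x '' {j : ℤ × Fin p | j ≠ i})).topologicalClosure := by
    rw [← SetLike.mem_coe, Submodule.topologicalClosure_coe]
    refine mem_closure_of_tendsto hβhas (Filter.Eventually.of_forall fun F => ?_)
    refine SetLike.mem_coe.mpr (Submodule.sum_mem _ fun j _ => ?_)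
    by_cases h : j = i
    · simp only [hβ, if_pos h, zero_smul]
      exact Submodule.zero_mem _
    · exact Submodule.smul_mem _ _ (Submodule.subset_span ⟨j, h, rfl⟩)
  have horth : ∀ j : ℤ × Fin p, j ≠ i → ⟪x i - y, x j⟫_ℝ = 0 := by
    intro j hj
    rw [hxiy, real_inner_smul_left, hsx, if_neg hj, mul_zero]
  have huniq : ∀ β' : (ℤ × Fin p) → ℝ, β' i = 0 →
      Summable (fun j : ℤ × Fin p => (β' j) ^ 2) →
      HasSum (fun j : ℤ × Fin p => β' j • x j) y → β' = β := by
    intro β' hβ'i hβ'sum hβ'has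
    set w : (ℤ × Fin p) → ℝ := fun j => β j - β' j with hw
    have hwmem : Memℓp w 2 := by
      refine memℓp_of_sq_summable w ?_
      refine Summable.of_nonneg_of_le (fun j => sq_nonneg _) (fun j => ?_)
        ((hβsum.add hβ'sum).mul_left 2)
      have := sq_nonneg (β j + β' j)
      simp only [hw]
      nlinarith
    set W : Ell2p p := ⟨w, hwmem⟩ with hW
    have hWcoe : ∀ j, (W j : ℝ) = w j := fun j => rfl
    have hwsum : HasSum (fun j => (W j : ℝ) • x j) 0 := by
      have h := hβhas.sub hβ'has
      rw [sub_self] at h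
      convert h using 2 with j
      rw [hWcoe, hw, sub_smul]
    have hCW : C W = 0 := by
      refine lp.ext ?_
      rw [lp.coeFn_zero]
      funext k
      have h1 : HasSum (fun j => (W j : ℝ) * ⟪x k, x j⟫_ℝ) ⟪C (e2p p k), W⟫_ℝ := by
        have := (hasSum_coords W).mapL (innerSL ℝ (C (e2p p k)))
        simpa [real_inner_smul_right, key] using this
      have h2 : HasSum (fun j => (W j : ℝ) * ⟪x k, x j⟫_ℝ) 0 := by
        have := hwsum.mapL (innerSL ℝ (x k))
        simpa [real_inner_smul_right] using this
      have h3 : ⟪C (e2p p k), W⟫_ℝ = 0 := h1.unique h2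
      have h4 : (C W) k = 0 := by
        rw [← coord_eq (C W) k, hCsa, real_inner_comm]
        exact h3
      exact h4
    have hW0 : W = 0 := by
      calc W = D (C W) := by
              have := congrArg (fun T => T W) hDC
              simpa using this.symm
        _ = 0 := by rw [hCW, map_zero]
    funext j
    have h5 : w j = 0 := by
      have := congrArg (fun u : Ell2p p => (u : (ℤ × Fin p) → ℝ) j) hW0
      simpa [hWcoe] using this
    have : β j - β' j = 0 := h5
    linarith
  have hlamle : lamInf ≤ ‖x i - y‖ ^ 2 := by
    rw [hσ]
    have h1 : lamInf * ‖d‖ ^ 2 ≤ d i := hCdd ▸ hlo d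
    have h2 : (d i : ℝ) ≤ ‖d‖ := by
      have h := real_inner_le_norm d (e2p p i)
      rwa [coord_eq, he, mul_one] at h
    have ha : lamInf * ‖d‖ ^ 2 ≤ ‖d‖ := h1.trans h2
    have hb : lamInf * ‖d‖ ≤ 1 := by nlinarith
    have h3 : lamInf * d i ≤ 1 :=
      (mul_le_mul_of_nonneg_left h2 hpos.le).trans hb
    rw [show (d i : ℝ)⁻¹ = 1 / d i by ring, le_div_iff₀ hdi]
    exact h3
  have hdiag : ⟪D (e2p p i), e2p p i⟫_ℝ = (‖x i - y‖ ^ 2)⁻¹ := by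
    rw [hσ, inv_inv]
    exact coord_eq d i
  have hoff : ∀ j : ℤ × Fin p, j ≠ i →
      ⟪D (e2p p j), e2p p i⟫_ℝ = -(β j / ‖x i - y‖ ^ 2) := by
    intro j hj
    have hDsa : ⟪D (e2p p j), e2p p i⟫_ℝ = ⟪e2p p j, D (e2p p i)⟫_ℝ := by
      have hCDv : C (D (e2p p i)) = e2p p i := by
        have := congrArg (fun T => T (e2p p i)) hCD
        simpa using this
      have hCDu : C (D (e2p p j)) = e2p p j := by
        have := congrArg (fun T => T (e2p p j)) hCD
        simpa using this
      calc ⟪D (e2p p j), e2p p i⟫_ℝ = ⟪D (e2p p j), C (D (e2p p i))⟫_ℝ := by rw [hCDv]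
        _ = ⟪C (D (e2p p j)), D (e2p p i)⟫_ℝ := (hCsa _ _).symm
        _ = ⟪e2p p j, D (e2p p i)⟫_ℝ := by rw [hCDu]
    have hL : ⟪D (e2p p j), e2p p i⟫_ℝ = d j := by
      rw [hDsa, real_inner_comm]
      exact coord_eq d j
    rw [hL, hσ]
    simp only [hβ, if_neg hj]
    field_simp
  exact ⟨β, y, by simp [hβ], hβsum, hβhas, hclos, horth, huniq, hlamle, hdiag, hoff⟩
end
end

section
/- (Lemma 2.2, covariance form.) Under Assumption 2.1, let (t,a) and (τ,b) be two distinct indices, let P be the orthogonal projection onto the closed linear span of {x_{(s,c)} : (s,c) ∉ {(t,a),(τ,b)}}, and set r₁ = x_{(t,a)} − P x_{(t,a)} and r₂ = x_{(τ,b)} − P x_{(τ,b)}. Then the 2×2 Gram matrix [[⟨r₁,r₁⟩, ⟨r₁,r₂⟩],[⟨r₂,r₁⟩, ⟨r₂,r₂⟩]] equals the matrix inverse of [[[D]_{(t,a),(t,a)}, [D]_{(t,a),(τ,b)}],[[D]_{(τ,b),(t,a)}, [D]_{(τ,b),(τ,b)}]]. -/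
open scoped InnerProductSpace

noncomputable section

/-!
Fix a finite set `F` of indices and let `r m` be the residual of `x m` (`m ∈ F`) against the
`x k`, `k ∉ F`. Then `x m - r m` is a limit of combinations of these `x k`, and the lower bound
`⟪C v, v⟫ ≥ λ_inf ‖v‖²` makes their coefficient vectors converge in `ℓ²` to some `w` supported off
`F` with `(C w) k = ⟪x k, x m - r m⟫`. So `u m := e m - w` has `(C (u m)) k = ⟪x k, r m⟫`, which is
`⟪r n, r m⟫` at `k = n ∈ F` and `0` off `F`; hence `u m = ∑ n ∈ F, ⟪r n, r m⟫ • D (e n)`, and since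
`u m` restricted to `F` is the indicator of `m`, the `F × F` block of `D` times the Gram matrix of
the residuals is the identity.
-/

open scoped lp
open Filter Topology

section

variable {ι H : Type*} [NormedAddCommGroup H] [InnerProductSpace ℝ H]

theorem IsResidual.mem_orthogonal {S : Set H} {y r : H} (hr : IsResidual S y r) :
    r ∈ (Submodule.span ℝ S).topologicalClosureᗮ := by
  rw [Submodule.orthogonal_closure, Submodule.mem_orthogonal']
  intro u hu
  induction hu using Submodule.span_induction with
  | mem z hz => exact hr.2 z hz
  | zero => exact inner_zero_right r
  | add u v _ _ hu hv => rw [inner_add_right, hu, hv, add_zero]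
  | smul a u _ hu => rw [real_inner_smul_right, hu, mul_zero]

theorem IsResidual.inner_left_eq {S : Set H} {y y' r r' : H} (hr : IsResidual S y r)
    (hr' : IsResidual S y' r') : ⟪y, r'⟫_ℝ = ⟪r, r'⟫_ℝ := by
  have := (Submodule.mem_orthogonal _ _).mp hr'.mem_orthogonal _ hr.1
  rwa [inner_sub_left, sub_eq_zero] at this

section GramOperator

variable [DecidableEq ι]

theorem lp.inner_single_one_right (f : ℓ²(ι, ℝ)) (k : ι) : ⟪f, lp.single 2 k 1⟫_ℝ = f k := by
  simp [lp.inner_single_right]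

def lp.ofFinsupp : (ι →₀ ℝ) →ₗ[ℝ] ℓ²(ι, ℝ) :=
  Finsupp.linearCombination ℝ fun l => lp.single 2 l 1

theorem lp.ofFinsupp_apply (v : ι →₀ ℝ) (k : ι) : lp.ofFinsupp v k = v k := by
  rw [lp.ofFinsupp, Finsupp.linearCombination_apply, Finsupp.sum, lp.coeFn_sum, Finset.sum_apply]
  simpa [Pi.single_apply] using fun h => h.symm

theorem lp.inner_ofFinsupp_right (f : ℓ²(ι, ℝ)) (v : ι →₀ ℝ) :
    ⟪f, lp.ofFinsupp v⟫_ℝ = ∑ k ∈ v.support, v k * f k := by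
  simp only [lp.ofFinsupp, Finsupp.linearCombination_apply, Finsupp.sum, inner_sum,
    real_inner_smul_right, lp.inner_single_one_right]

variable {x : ι → H} {C : ℓ²(ι, ℝ) →L[ℝ] ℓ²(ι, ℝ)}

theorem apply_ofFinsupp_eq_inner (hC : ∀ i j, C (lp.single 2 j 1) i = ⟪x i, x j⟫_ℝ)
    (v : ι →₀ ℝ) (k : ι) :
    C (lp.ofFinsupp v) k = ⟪x k, Finsupp.linearCombination ℝ x v⟫_ℝ := by
  simp only [lp.ofFinsupp, Finsupp.linearCombination_apply, Finsupp.sum, map_sum, map_smul,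
    lp.coeFn_sum, Finset.sum_apply, lp.coeFn_smul, Pi.smul_apply, hC, inner_sum,
    real_inner_smul_right, smul_eq_mul]

theorem inner_apply_ofFinsupp_self (hC : ∀ i j, C (lp.single 2 j 1) i = ⟪x i, x j⟫_ℝ)
    (v : ι →₀ ℝ) :
    ⟪C (lp.ofFinsupp v), lp.ofFinsupp v⟫_ℝ = ‖Finsupp.linearCombination ℝ x v‖ ^ 2 := by
  rw [lp.inner_ofFinsupp_right, ← real_inner_self_eq_norm_sq]
  nth_rw 1 [Finsupp.linearCombination_apply]
  simp only [apply_ofFinsupp_eq_inner hC, Finsupp.sum, sum_inner, real_inner_smul_left]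

theorem sqrt_mul_norm_ofFinsupp_le {c : ℝ} (hc : 0 ≤ c) (hlo : ∀ v, c * ‖v‖ ^ 2 ≤ ⟪C v, v⟫_ℝ)
    (hC : ∀ i j, C (lp.single 2 j 1) i = ⟪x i, x j⟫_ℝ) (v : ι →₀ ℝ) :
    √c * ‖lp.ofFinsupp v‖ ≤ ‖Finsupp.linearCombination ℝ x v‖ := by
  refine (pow_le_pow_iff_left₀ (by positivity) (norm_nonneg _) two_ne_zero).mp ?_
  rw [mul_pow, Real.sq_sqrt hc, ← inner_apply_ofFinsupp_self hC]
  exact hlo _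

theorem exists_apply_eq_inner_of_mem_closure_span {c : ℝ} (hc : 0 < c)
    (hlo : ∀ v, c * ‖v‖ ^ 2 ≤ ⟪C v, v⟫_ℝ) (hC : ∀ i j, C (lp.single 2 j 1) i = ⟪x i, x j⟫_ℝ)
    {s : Set ι} {y : H} (hy : y ∈ (Submodule.span ℝ (x '' s)).topologicalClosure) :
    ∃ w : ℓ²(ι, ℝ), (∀ k ∉ s, w k = 0) ∧ ∀ k, C w k = ⟪x k, y⟫_ℝ := by
  rw [← SetLike.mem_coe, Submodule.topologicalClosure_coe] at hy
  obtain ⟨a, ha_mem, ha_lim⟩ := mem_closure_iff_seq_limit.mp hy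
  choose v hv_supp hv_eq using fun n =>
    (Finsupp.mem_span_image_iff_linearCombination ℝ).mp (ha_mem n)
  have hcauchy : CauchySeq fun n => lp.ofFinsupp (v n) := by
    rw [cauchySeq_iff_tendsto_dist_atTop_0]
    have hdist := (cauchySeq_iff_tendsto_dist_atTop_0.mp ha_lim.cauchySeq).const_mul (√c)⁻¹
    rw [mul_zero] at hdist
    refine squeeze_zero (fun _ => dist_nonneg) (fun n => ?_) hdist
    rw [dist_eq_norm, dist_eq_norm, ← map_sub, ← hv_eq, ← hv_eq, ← map_sub,
      le_inv_mul_iff₀ (by positivity)]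
    exact sqrt_mul_norm_ofFinsupp_le hc.le hlo hC _
  obtain ⟨w, hw⟩ := cauchySeq_tendsto_of_complete hcauchy
  have hcoord {f : ℕ → ℓ²(ι, ℝ)} {g : ℓ²(ι, ℝ)} (hf : Tendsto f atTop (𝓝 g)) (k : ι) :
      Tendsto (fun n => f n k) atTop (𝓝 (g k)) :=
    tendsto_pi_nhds.mp ((lp.uniformContinuous_coe.continuous.tendsto g).comp hf) k
  refine ⟨w, fun k hk => ?_, fun k => ?_⟩
  · refine tendsto_nhds_unique (hcoord hw k) ?_
    simp only [lp.ofFinsupp_apply, (Finsupp.mem_supported' ℝ _).mp (hv_supp _) k hk]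
    exact tendsto_const_nhds
  · refine tendsto_nhds_unique (hcoord ((C.continuous.tendsto w).comp hw) k) ?_
    simp only [Function.comp_apply, apply_ofFinsupp_eq_inner hC, hv_eq]
    exact tendsto_const_nhds.inner ha_lim

end GramOperator

section Residuals

variable [DecidableEq ι] {κ : Type*} [Fintype κ] [DecidableEq κ] {x : ι → H}
  {C : ℓ²(ι, ℝ) →L[ℝ] ℓ²(ι, ℝ)} {idx : κ → ι} {r : κ → H}

theorem exists_apply_eq_sum_inner_residual {c : ℝ} (hc : 0 < c)
    (hlo : ∀ v, c * ‖v‖ ^ 2 ≤ ⟪C v, v⟫_ℝ) (hC : ∀ i j, C (lp.single 2 j 1) i = ⟪x i, x j⟫_ℝ)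
    (hidx : idx.Injective) (hr : ∀ m, IsResidual (x '' (Set.range idx)ᶜ) (x (idx m)) (r m))
    (m : κ) :
    ∃ u : ℓ²(ι, ℝ), (∀ l, u (idx l) = (1 : Matrix κ κ ℝ) l m) ∧
      C u = ∑ n, ⟪r n, r m⟫_ℝ • lp.single 2 (idx n) 1 := by
  obtain ⟨w, hw_zero, hCw⟩ := exists_apply_eq_inner_of_mem_closure_span hc hlo hC (hr m).1
  refine ⟨lp.single 2 (idx m) 1 - w, fun l => ?_, lp.ext (funext fun k => ?_)⟩
  · rw [lp.coeFn_sub, Pi.sub_apply, hw_zero _ (by simp), sub_zero, lp.single_apply,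
      Pi.single_apply]
    simp only [hidx.eq_iff, Matrix.one_apply]
  rw [map_sub, lp.coeFn_sub, Pi.sub_apply, hC, hCw, ← inner_sub_right, sub_sub_cancel,
    lp.coeFn_sum, Finset.sum_apply]
  simp only [lp.coeFn_smul, Pi.smul_apply, lp.single_apply, Pi.single_apply, smul_eq_mul,
    mul_ite, mul_one, mul_zero]
  by_cases hk : k ∈ Set.range idx
  · obtain ⟨n, rfl⟩ := hk
    simp [hidx.eq_iff, (hr n).inner_left_eq (hr m)]
  · rw [real_inner_comm, (hr m).2 _ ⟨k, hk, rfl⟩, Finset.sum_eq_zero]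
    exact fun n _ => if_neg fun h => hk ⟨n, h.symm⟩

theorem matrix_apply_single_mul_gram_residual_eq_one {c : ℝ} (hc : 0 < c)
    (hlo : ∀ v, c * ‖v‖ ^ 2 ≤ ⟪C v, v⟫_ℝ) (hC : ∀ i j, C (lp.single 2 j 1) i = ⟪x i, x j⟫_ℝ)
    {D : ℓ²(ι, ℝ) →L[ℝ] ℓ²(ι, ℝ)} (hDC : D.comp C = ContinuousLinearMap.id ℝ _)
    (hidx : idx.Injective) (hr : ∀ m, IsResidual (x '' (Set.range idx)ᶜ) (x (idx m)) (r m)) :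
    Matrix.of (fun l n => D (lp.single 2 (idx n) 1) (idx l)) *
      Matrix.of (fun m n => ⟪r m, r n⟫_ℝ) = 1 := by
  ext l m
  obtain ⟨u, hu_idx, hCu⟩ := exists_apply_eq_sum_inner_residual hc hlo hC hidx hr m
  have hDCu : D (C u) = u := congr($hDC u)
  rw [Matrix.mul_apply, ← hu_idx, ← hDCu, hCu, map_sum, lp.coeFn_sum, Finset.sum_apply]
  simp [mul_comm]

end Residuals

end

theorem statement_3_general
    {H : Type*} [NormedAddCommGroup H] [InnerProductSpace ℝ H]
    (p : ℕ) (x : ℤ × Fin p → H)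
    (lamInf : ℝ)
    (hpos : 0 < lamInf)
    (C : Ell2p p →L[ℝ] Ell2p p)
    (hC : ∀ i j : ℤ × Fin p, ⟪C (e2p p j), e2p p i⟫_ℝ = ⟪x i, x j⟫_ℝ)
    (hlo : ∀ v : Ell2p p, lamInf * ‖v‖ ^ 2 ≤ ⟪C v, v⟫_ℝ)
    (D : Ell2p p →L[ℝ] Ell2p p)
    (hDC : D.comp C = ContinuousLinearMap.id ℝ (Ell2p p))
    (i j : ℤ × Fin p) (hij : i ≠ j)
    (r₁ r₂ : H)
    (hr₁ : IsResidual (x '' {k : ℤ × Fin p | k ≠ i ∧ k ≠ j}) (x i) r₁)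
    (hr₂ : IsResidual (x '' {k : ℤ × Fin p | k ≠ i ∧ k ≠ j}) (x j) r₂) :
    !![⟪r₁, r₁⟫_ℝ, ⟪r₁, r₂⟫_ℝ; ⟪r₂, r₁⟫_ℝ, ⟪r₂, r₂⟫_ℝ] =
      (!![⟪D (e2p p i), e2p p i⟫_ℝ, ⟪D (e2p p j), e2p p i⟫_ℝ;
          ⟪D (e2p p i), e2p p j⟫_ℝ, ⟪D (e2p p j), e2p p j⟫_ℝ])⁻¹ := by
  have hC_apply : ∀ i j, C (lp.single 2 j 1) i = ⟪x i, x j⟫_ℝ := fun i j => by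
    simpa only [e2p, lp.inner_single_one_right] using hC i j
  have hidx : (![i, j] : Fin 2 → ℤ × Fin p).Injective := by
    intro a b
    fin_cases a <;> fin_cases b <;> simp [hij, hij.symm]
  have hS : (Set.range ![i, j])ᶜ = {k | k ≠ i ∧ k ≠ j} := by
    ext k
    simp [and_comm]
  have hr : ∀ m, IsResidual (x '' (Set.range ![i, j])ᶜ) (x (![i, j] m)) (![r₁, r₂] m) := by
    rw [hS, Fin.forall_fin_two]
    exact ⟨hr₁, hr₂⟩
  convert (Matrix.inv_eq_right_inv
    (matrix_apply_single_mul_gram_residual_eq_one hpos hlo hC_apply hDC hidx hr)).symm using 2 <;>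
    ext l m <;> fin_cases l <;> fin_cases m <;> simp [e2p, lp.inner_single_one_right]

/-- **Lemma 2.2, covariance form.** The 2×2 Gram matrix of the two residuals
equals the inverse of the corresponding 2×2 submatrix of the inverse Gram operator. -/
theorem statement_3
    {H : Type*} [NormedAddCommGroup H] [InnerProductSpace ℝ H] [CompleteSpace H]
    (p : ℕ) (hp : 1 ≤ p) (x : ℤ × Fin p → H)
    (lamInf lamSup : ℝ)
    (hInf : IsGLB (gramQuadSet x) lamInf)
    (hSup : IsLUB (gramQuadSet x) lamSup)
    (hpos : 0 < lamInf)
    (C : Ell2p p →L[ℝ] Ell2p p)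
    (hC : ∀ i j : ℤ × Fin p, ⟪C (e2p p j), e2p p i⟫_ℝ = ⟪x i, x j⟫_ℝ)
    (hCsa : ∀ u v : Ell2p p, ⟪C u, v⟫_ℝ = ⟪u, C v⟫_ℝ)
    (hlo : ∀ v : Ell2p p, lamInf * ‖v‖ ^ 2 ≤ ⟪C v, v⟫_ℝ)
    (hhi : ∀ v : Ell2p p, ⟪C v, v⟫_ℝ ≤ lamSup * ‖v‖ ^ 2)
    (D : Ell2p p →L[ℝ] Ell2p p)
    (hCD : C.comp D = ContinuousLinearMap.id ℝ (Ell2p p))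
    (hDC : D.comp C = ContinuousLinearMap.id ℝ (Ell2p p))
    (i j : ℤ × Fin p) (hij : i ≠ j)
    (r₁ r₂ : H)
    (hr₁ : IsResidual (x '' {k : ℤ × Fin p | k ≠ i ∧ k ≠ j}) (x i) r₁)
    (hr₂ : IsResidual (x '' {k : ℤ × Fin p | k ≠ i ∧ k ≠ j}) (x j) r₂) :
    !![⟪r₁, r₁⟫_ℝ, ⟪r₁, r₂⟫_ℝ; ⟪r₂, r₁⟫_ℝ, ⟪r₂, r₂⟫_ℝ] =
      (!![⟪D (e2p p i), e2p p i⟫_ℝ, ⟪D (e2p p j), e2p p i⟫_ℝ;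
          ⟪D (e2p p i), e2p p j⟫_ℝ, ⟪D (e2p p j), e2p p j⟫_ℝ])⁻¹ :=
  statement_3_general p x lamInf hpos C hC hlo D hDC i j hij r₁ r₂ hr₁ hr₂
end
end

section
/- (Lemma 2.2, correlation form.) Under Assumption 2.1, let (t,a) and (τ,b) be two distinct indices, let P be the orthogonal projection onto the closed linear span of {x_{(s,c)} : (s,c) ∉ {(t,a),(τ,b)}}, and set r₁ = x_{(t,a)} − P x_{(t,a)} and r₂ = x_{(τ,b)} − P x_{(τ,b)}. Then the partial correlation ⟨r₁, r₂⟩ / √(⟨r₁,r₁⟩·⟨r₂,r₂⟩) equals −[D]_{(t,a),(τ,b)} / √([D]_{(t,a),(t,a)}·[D]_{(τ,b),(τ,b)}). -/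
open scoped InnerProductSpace
open scoped ENNReal

set_option linter.unusedSectionVars false
set_option linter.unnecessarySimpa false
set_option linter.unusedVariables false
noncomputable section

section Aux

variable {H : Type*} [NormedAddCommGroup H] [InnerProductSpace ℝ H] [CompleteSpace H]
variable {p : ℕ} (x : ℤ × Fin p → H)

/-- orthogonality to a set extends to closure of span -/
lemma aux_orth (S : Set H) (r : H) (hr : ∀ z ∈ S, ⟪r, z⟫_ℝ = 0) :
    ∀ m ∈ (Submodule.span ℝ S).topologicalClosure, ⟪r, m⟫_ℝ = 0 := by
  intro m hm
  have hker : (Submodule.span ℝ S).topologicalClosure ≤ (innerSL ℝ r).ker := by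
    apply Submodule.topologicalClosure_minimal
    · rw [Submodule.span_le]
      intro z hz
      simpa using hr z hz
    · exact ContinuousLinearMap.isClosed_ker (innerSL ℝ r)
  simpa using hker hm

/-- quadratic form upper bound for arbitrary finsupps -/
lemma aux_quad {lamSup : ℝ} (hSup : ∀ r ∈ gramQuadSet x, r ≤ lamSup)
    (v : (ℤ × Fin p) →₀ ℝ) :
    ‖∑ i ∈ v.support, v i • x i‖ ^ 2 ≤ lamSup * ∑ i ∈ v.support, (v i) ^ 2 := by
  by_cases hv : v = 0
  · simp [hv]
  · set s : ℝ := ∑ i ∈ v.support, (v i) ^ 2 with hs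
    obtain ⟨k, hk⟩ := Finsupp.support_nonempty_iff.2 hv
    have hspos : 0 < s := by
      have h1 : (0:ℝ) < (v k) ^ 2 := by
        have := Finsupp.mem_support_iff.1 hk
        positivity
      have h2 : (v k) ^ 2 ≤ s := by
        apply Finset.single_le_sum (fun i _ => by positivity) hk
      linarith
    set c : ℝ := (Real.sqrt s)⁻¹ with hc
    have hcpos : 0 < c := by
      rw [hc]
      exact inv_pos.2 (Real.sqrt_pos.2 hspos)
    have hc2 : c ^ 2 = s⁻¹ := by
      rw [hc, ← Real.sqrt_inv]
      exact Real.sq_sqrt (by positivity)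
    have hmem : c ^ 2 * ‖∑ i ∈ v.support, v i • x i‖ ^ 2 ∈ gramQuadSet x := by
      refine ⟨c • v, ?_, ?_⟩
      · rw [Finsupp.support_smul_eq hcpos.ne']
        have : ∀ i ∈ v.support, ((c • v) i) ^ 2 = c ^ 2 * (v i) ^ 2 := by
          intro i _; simp [Finsupp.smul_apply]; ring
        rw [Finset.sum_congr rfl this, ← Finset.mul_sum, hc2, ← hs]
        field_simp
      · rw [Finsupp.support_smul_eq hcpos.ne']
        have : ∀ i ∈ v.support, ((c • v) i) • x i = c • (v i • x i) := by
          intro i _; simp [Finsupp.smul_apply, smul_smul]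
        rw [Finset.sum_congr rfl this, ← Finset.smul_sum, norm_smul]
        rw [mul_pow, Real.norm_eq_abs, sq_abs]
    have hle := hSup _ hmem
    have : ‖∑ i ∈ v.support, v i • x i‖ ^ 2 = s * (c ^ 2 * ‖∑ i ∈ v.support, v i • x i‖ ^ 2) := by
      rw [hc2]; field_simp
    rw [this]
    calc s * (c ^ 2 * ‖∑ i ∈ v.support, v i • x i‖ ^ 2) ≤ s * lamSup := by
          exact mul_le_mul_of_nonneg_left hle hspos.le
      _ = lamSup * s := by ring


/-- Bessel-type inequality -/
lemma aux_bessel {lamSup : ℝ} (hSup : ∀ r ∈ gramQuadSet x, r ≤ lamSup) (hS0 : 0 ≤ lamSup)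
    (h : H) (F : Finset (ℤ × Fin p)) :
    ∑ k ∈ F, ⟪x k, h⟫_ℝ ^ 2 ≤ lamSup * ‖h‖ ^ 2 := by
  classical
  set v : (ℤ × Fin p) →₀ ℝ :=
    Finsupp.onFinset F (fun k => if k ∈ F then ⟪x k, h⟫_ℝ else 0)
      (by intro k hk; by_contra hkF; simp [hkF] at hk) with hv
  have hsupp : v.support ⊆ F := Finsupp.support_onFinset_subset
  set S : ℝ := ∑ k ∈ F, ⟪x k, h⟫_ℝ ^ 2 with hS
  have hsq : ∑ i ∈ v.support, (v i) ^ 2 = S := by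
    rw [Finset.sum_subset hsupp (fun k _ hk => by
      simpa using pow_eq_zero_iff (n := 2) (by norm_num) |>.2 (Finsupp.notMem_support_iff.1 hk))]
    apply Finset.sum_congr rfl
    intro k hk; simp [hv, Finsupp.onFinset_apply, if_pos hk]
  have hvec : ∑ i ∈ v.support, v i • x i = ∑ k ∈ F, ⟪x k, h⟫_ℝ • x k := by
    rw [Finset.sum_subset hsupp (fun k _ hk => by
      simp [Finsupp.notMem_support_iff.1 hk])]
    apply Finset.sum_congr rfl
    intro k hk; simp [hv, Finsupp.onFinset_apply, if_pos hk]
  set w : H := ∑ k ∈ F, ⟪x k, h⟫_ℝ • x k with hw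
  have hwS : ⟪w, h⟫_ℝ = S := by
    rw [hw, sum_inner]
    apply Finset.sum_congr rfl
    intro k _
    rw [real_inner_smul_left]; ring
  have hwn : ‖w‖ ^ 2 ≤ lamSup * S := by
    have := aux_quad x hSup v
    rwa [hsq, hvec] at this
  have hS0' : 0 ≤ S := Finset.sum_nonneg (fun k _ => sq_nonneg _)
  rcases eq_or_lt_of_le hS0' with hSz | hSpos
  · rw [← hSz]; positivity
  · have h1 : S ≤ ‖w‖ * ‖h‖ := by rw [← hwS]; exact real_inner_le_norm w h
    have h2 : S ^ 2 ≤ ‖w‖ ^ 2 * ‖h‖ ^ 2 := by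
      calc S ^ 2 ≤ (‖w‖ * ‖h‖) ^ 2 := by
            apply pow_le_pow_left₀ hS0' h1
        _ = ‖w‖ ^ 2 * ‖h‖ ^ 2 := by ring
    nlinarith [hwn, hSpos]

/-- the analysis operator -/
lemma exists_analysis {lamSup : ℝ} (hSup : ∀ r ∈ gramQuadSet x, r ≤ lamSup) (hS0 : 0 ≤ lamSup) :
    ∃ A : H →L[ℝ] Ell2p p, ∀ h k, (A h : ∀ _ : ℤ × Fin p, ℝ) k = ⟪x k, h⟫_ℝ := by
  have hmem : ∀ h : H, Memℓp (fun k => ⟪x k, h⟫_ℝ) 2 := by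
    intro h
    apply memℓp_gen' (C := lamSup * ‖h‖ ^ 2)
    intro s
    have : ∀ k ∈ s, ‖⟪x k, h⟫_ℝ‖ ^ (2 : ℝ≥0∞).toReal = ⟪x k, h⟫_ℝ ^ 2 := by
      intro k _
      rw [ENNReal.toReal_ofNat, Real.rpow_two, Real.norm_eq_abs, sq_abs]
    rw [Finset.sum_congr rfl this]
    exact aux_bessel x hSup hS0 h s
  set A₀ : H →ₗ[ℝ] Ell2p p :=
    { toFun := fun h => ⟨fun k => ⟪x k, h⟫_ℝ, hmem h⟩
      map_add' := by intro a b; ext k; simp [inner_add_right]; rfl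
      map_smul' := by intro c a; ext k; simp [inner_smul_right] } with hA₀
  have hbound : ∀ h : H, ‖A₀ h‖ ≤ Real.sqrt lamSup * ‖h‖ := by
    intro h
    apply lp.norm_le_of_tsum_le (by norm_num) (by positivity)
    have hsum : Summable (fun k => ‖(A₀ h : ∀ _ : ℤ × Fin p, ℝ) k‖ ^ (2 : ℝ≥0∞).toReal) := by
      have := lp.memℓp (A₀ h)
      rwa [memℓp_gen_iff (by norm_num)] at this
    have hts : ∑' k, ‖(A₀ h : ∀ _ : ℤ × Fin p, ℝ) k‖ ^ (2 : ℝ≥0∞).toReal ≤ lamSup * ‖h‖ ^ 2 := by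
      apply Summable.tsum_le_of_sum_le hsum
      intro s
      have : ∀ k ∈ s, ‖(A₀ h : ∀ _ : ℤ × Fin p, ℝ) k‖ ^ (2 : ℝ≥0∞).toReal = ⟪x k, h⟫_ℝ ^ 2 := by
        intro k _
        rw [ENNReal.toReal_ofNat, Real.rpow_two]
        show |⟪x k, h⟫_ℝ| ^ 2 = _
        rw [sq_abs]
      rw [Finset.sum_congr rfl this]
      exact aux_bessel x hSup hS0 h s
    calc ∑' k, ‖(A₀ h : ∀ _ : ℤ × Fin p, ℝ) k‖ ^ (2 : ℝ≥0∞).toReal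
        ≤ lamSup * ‖h‖ ^ 2 := hts
      _ = (Real.sqrt lamSup * ‖h‖) ^ (2 : ℝ≥0∞).toReal := by
          rw [ENNReal.toReal_ofNat, Real.rpow_two, mul_pow, Real.sq_sqrt hS0]
  refine ⟨A₀.mkContinuous (Real.sqrt lamSup) hbound, fun h k => rfl⟩


/-- continuous linear maps out of `Ell2p p` agreeing on basis vectors agree -/
lemma clm_ext_single {E : Type*} [NormedAddCommGroup E] [NormedSpace ℝ E]
    (F G : Ell2p p →L[ℝ] E) (h : ∀ k, F (e2p p k) = G (e2p p k)) : F = G := by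
  ext f
  have hs : HasSum (fun k : ℤ × Fin p => lp.single 2 k (f k : ℝ)) f :=
    lp.hasSum_single ENNReal.ofNat_ne_top f
  have hF : HasSum (fun k : ℤ × Fin p => F (lp.single 2 k (f k : ℝ))) (F f) := hs.mapL F
  have hG : HasSum (fun k : ℤ × Fin p => G (lp.single 2 k (f k : ℝ))) (G f) := hs.mapL G
  have heq : (fun k : ℤ × Fin p => F (lp.single 2 k (f k : ℝ)))
      = fun k : ℤ × Fin p => G (lp.single 2 k (f k : ℝ)) := by
    funext k
    have h1 : lp.single 2 k (f k : ℝ) = (f k : ℝ) • e2p p k := by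
      rw [e2p, ← lp.single_smul]
      norm_num
    rw [h1, map_smul, map_smul, h k]
  rw [heq] at hF
  exact hF.unique hG

end Aux


/-- **Lemma 2.2, correlation form.** The partial correlation of the residuals
equals the normalized negated entry of the inverse Gram operator. -/
theorem statement_4
    {H : Type*} [NormedAddCommGroup H] [InnerProductSpace ℝ H] [CompleteSpace H]
    (p : ℕ) (hp : 1 ≤ p) (x : ℤ × Fin p → H)
    (lamInf lamSup : ℝ)
    (hInf : IsGLB (gramQuadSet x) lamInf)
    (hSup : IsLUB (gramQuadSet x) lamSup)
    (hpos : 0 < lamInf)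
    (C : Ell2p p →L[ℝ] Ell2p p)
    (hC : ∀ i j : ℤ × Fin p, ⟪C (e2p p j), e2p p i⟫_ℝ = ⟪x i, x j⟫_ℝ)
    (hCsa : ∀ u v : Ell2p p, ⟪C u, v⟫_ℝ = ⟪u, C v⟫_ℝ)
    (hlo : ∀ v : Ell2p p, lamInf * ‖v‖ ^ 2 ≤ ⟪C v, v⟫_ℝ)
    (hhi : ∀ v : Ell2p p, ⟪C v, v⟫_ℝ ≤ lamSup * ‖v‖ ^ 2)
    (D : Ell2p p →L[ℝ] Ell2p p)
    (hCD : C.comp D = ContinuousLinearMap.id ℝ (Ell2p p))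
    (hDC : D.comp C = ContinuousLinearMap.id ℝ (Ell2p p))
    (i j : ℤ × Fin p) (hij : i ≠ j)
    (r₁ r₂ : H)
    (hr₁ : IsResidual (x '' {k : ℤ × Fin p | k ≠ i ∧ k ≠ j}) (x i) r₁)
    (hr₂ : IsResidual (x '' {k : ℤ × Fin p | k ≠ i ∧ k ≠ j}) (x j) r₂) :
    ⟪r₁, r₂⟫_ℝ / Real.sqrt (⟪r₁, r₁⟫_ℝ * ⟪r₂, r₂⟫_ℝ) =
      -⟪D (e2p p j), e2p p i⟫_ℝ /
        Real.sqrt (⟪D (e2p p i), e2p p i⟫_ℝ * ⟪D (e2p p j), e2p p j⟫_ℝ) := by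
  classical
  -- `lamSup` is nonnegative
  have hS0 : (0:ℝ) ≤ lamSup := by
    set k0 : ℤ × Fin p := (0, ⟨0, hp⟩) with hk0
    have hmem : ‖x k0‖ ^ 2 ∈ gramQuadSet x := by
      refine ⟨Finsupp.single k0 1, ?_, ?_⟩
      · simp [Finsupp.support_single_ne_zero k0 one_ne_zero]
      · simp [Finsupp.support_single_ne_zero k0 one_ne_zero]
    have h1 := hInf.1 hmem
    have h2 := hSup.1 hmem
    linarith
  obtain ⟨A, hA⟩ := exists_analysis x (fun r hr => hSup.1 hr) hS0
  set T : Ell2p p →L[ℝ] H := ContinuousLinearMap.adjoint A with hTdef0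
  have hTdef : ∀ (v : Ell2p p) (h : H), ⟪T v, h⟫_ℝ = ⟪v, A h⟫_ℝ :=
    fun v h => ContinuousLinearMap.adjoint_inner_left A h v
  -- coordinates of basis vectors
  have he : ∀ k m : ℤ × Fin p, (e2p p k : ∀ _ : ℤ × Fin p, ℝ) m = if m = k then (1:ℝ) else 0 := by
    intro k m
    rw [e2p, lp.single_apply]
    by_cases h : m = k <;> simp [h]
  have hinnerE : ∀ (k : ℤ × Fin p) (f : Ell2p p),
      ⟪e2p p k, f⟫_ℝ = (f : ∀ _ : ℤ × Fin p, ℝ) k := by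
    intro k f
    rw [e2p, lp.inner_single_left]
    simp [RCLike.inner_apply]
  have hinnerE' : ∀ (f : Ell2p p) (k : ℤ × Fin p),
      ⟪f, e2p p k⟫_ℝ = (f : ∀ _ : ℤ × Fin p, ℝ) k := by
    intro f k
    rw [e2p, lp.inner_single_right]
    simp [RCLike.inner_apply]
  -- the synthesis operator sends basis vectors to the time series
  have hTe : ∀ k, T (e2p p k) = x k := by
    intro k
    apply ext_inner_right ℝ
    intro h
    rw [hTdef, hinnerE, hA]
  have hAx : ∀ k, A (x k) = C (e2p p k) := by
    intro k
    ext m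
    rw [hA, ← hC m k, hinnerE']
  have hATC : A.comp T = C := by
    apply clm_ext_single
    intro k
    rw [ContinuousLinearMap.comp_apply, hTe k, hAx k]
  have hAT : ∀ v, A (T v) = C v := by
    intro v
    have := ContinuousLinearMap.ext_iff.1 hATC v
    rwa [ContinuousLinearMap.comp_apply] at this
  have hTT : ∀ v w : Ell2p p, ⟪T v, T w⟫_ℝ = ⟪v, C w⟫_ℝ := by
    intro v w
    rw [hTdef, hAT]
  have hCDv : ∀ v, C (D v) = v := by
    intro v
    have := ContinuousLinearMap.ext_iff.1 hCD v
    simpa using this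
  have hDsa : ∀ u v : Ell2p p, ⟪D u, v⟫_ℝ = ⟪u, D v⟫_ℝ := by
    intro u v
    calc ⟪D u, v⟫_ℝ = ⟪D u, C (D v)⟫_ℝ := by rw [hCDv]
      _ = ⟪C (D u), D v⟫_ℝ := (hCsa (D u) (D v)).symm
      _ = ⟪u, D v⟫_ℝ := by rw [hCDv]
  -- the entries
  set p11 : ℝ := ⟪D (e2p p i), e2p p i⟫_ℝ with hp11def
  set p12 : ℝ := ⟪D (e2p p j), e2p p i⟫_ℝ with hp12def
  set p22 : ℝ := ⟪D (e2p p j), e2p p j⟫_ℝ with hp22def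
  have hp21 : ⟪D (e2p p i), e2p p j⟫_ℝ = p12 := by
    rw [hDsa, real_inner_comm, hp12def]
  -- the dual vectors
  set y₁ : H := T (D (e2p p i)) with hy₁def
  set y₂ : H := T (D (e2p p j)) with hy₂def
  have hy1x : ∀ k, ⟪y₁, x k⟫_ℝ = if k = i then (1:ℝ) else 0 := by
    intro k
    rw [hy₁def, hTdef, hAx, ← hCsa, hCDv, hinnerE, he]
    simp [eq_comm]
  have hy2x : ∀ k, ⟪y₂, x k⟫_ℝ = if k = j then (1:ℝ) else 0 := by
    intro k
    rw [hy₂def, hTdef, hAx, ← hCsa, hCDv, hinnerE, he]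
    simp [eq_comm]
  have hy11 : ⟪y₁, y₁⟫_ℝ = p11 := by
    rw [hy₁def, hTT, hCDv, hp11def]
  have hy12 : ⟪y₁, y₂⟫_ℝ = p12 := by
    rw [hy₁def, hy₂def, hTT, hCDv, hp21]
  have hy21 : ⟪y₂, y₁⟫_ℝ = p12 := by rw [real_inner_comm, hy12]
  have hy22 : ⟪y₂, y₂⟫_ℝ = p22 := by
    rw [hy₂def, hTT, hCDv, hp22def]
  -- the ambient closed span
  set N : Submodule ℝ H := (Submodule.span ℝ (Set.range x)).topologicalClosure with hNdef
  have hxN : ∀ k, x k ∈ N := fun k =>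
    Submodule.le_topologicalClosure _ (Submodule.subset_span ⟨k, rfl⟩)
  have hTN : ∀ v : Ell2p p, T v ∈ N := by
    intro v
    rw [hNdef, ← Submodule.orthogonal_orthogonal_eq_closure]
    rw [Submodule.mem_orthogonal]
    intro h hh
    have hAh : A h = 0 := by
      ext m
      have hxm : ⟪x m, h⟫_ℝ = 0 :=
        (Submodule.mem_orthogonal _ h).1 hh (x m) (Submodule.subset_span ⟨m, rfl⟩)
      rw [hA, hxm]
      simp
    rw [real_inner_comm, hTdef, hAh, inner_zero_right]
  -- the excluded set and local span
  set S : Set H := x '' {k : ℤ × Fin p | k ≠ i ∧ k ≠ j} with hSdef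
  have hr₁S : ∀ z ∈ S, ⟪r₁, z⟫_ℝ = 0 := hr₁.2
  have hr₂S : ∀ z ∈ S, ⟪r₂, z⟫_ℝ = 0 := hr₂.2
  have hy1S : ∀ z ∈ S, ⟪y₁, z⟫_ℝ = 0 := by
    rintro z ⟨k, ⟨hk1, hk2⟩, rfl⟩
    rw [hy1x k, if_neg hk1]
  have hy2S : ∀ z ∈ S, ⟪y₂, z⟫_ℝ = 0 := by
    rintro z ⟨k, ⟨hk1, hk2⟩, rfl⟩
    rw [hy2x k, if_neg hk2]
  have hMN : (Submodule.span ℝ S).topologicalClosure ≤ N := by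
    apply Submodule.topologicalClosure_mono
    apply Submodule.span_mono
    rintro z ⟨k, _, rfl⟩
    exact ⟨k, rfl⟩
  have hr1N : r₁ ∈ N := by
    have h1 : x i - r₁ ∈ N := hMN hr₁.1
    have h2 : r₁ = x i - (x i - r₁) := (sub_sub_cancel _ _).symm
    rw [h2]
    exact Submodule.sub_mem N (hxN i) h1
  have hr2N : r₂ ∈ N := by
    have h1 : x j - r₂ ∈ N := hMN hr₂.1
    have h2 : r₂ = x j - (x j - r₂) := (sub_sub_cancel _ _).symm
    rw [h2]
    exact Submodule.sub_mem N (hxN j) h1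
  -- the decomposition lemma
  have hdec : ∀ z : H, z ∈ N → (∀ z' ∈ S, ⟪z, z'⟫_ℝ = 0) →
      z = ⟪z, x i⟫_ℝ • y₁ + ⟪z, x j⟫_ℝ • y₂ := by
    intro z hzN hzS
    set z' : H := z - ⟪z, x i⟫_ℝ • y₁ - ⟪z, x j⟫_ℝ • y₂ with hz'
    have hz'x : ∀ k, ⟪z', x k⟫_ℝ = 0 := by
      intro k
      rw [hz', inner_sub_left, inner_sub_left, real_inner_smul_left, real_inner_smul_left,
        hy1x k, hy2x k]
      by_cases hk1 : k = i
      · subst hk1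
        rw [if_pos rfl, if_neg hij]
        ring
      · by_cases hk2 : k = j
        · subst hk2
          rw [if_neg hk1, if_pos rfl]
          ring
        · rw [if_neg hk1, if_neg hk2, hzS (x k) ⟨k, ⟨hk1, hk2⟩, rfl⟩]
          ring
    have hz'N : z' ∈ N := by
      rw [hz']
      exact Submodule.sub_mem N
        (Submodule.sub_mem N hzN (Submodule.smul_mem N _ (hTN _)))
        (Submodule.smul_mem N _ (hTN _))
    have hz'o : ∀ m ∈ N, ⟪z', m⟫_ℝ = 0 := by
      apply aux_orth (Set.range x) z'
      rintro _ ⟨k, rfl⟩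
      exact hz'x k
    have hz'0 : z' = 0 := by
      have := hz'o z' hz'N
      rwa [inner_self_eq_zero] at this
    have : z - (⟪z, x i⟫_ℝ • y₁ + ⟪z, x j⟫_ℝ • y₂) = 0 := by
      rw [← sub_sub]
      exact hz'0
    exact sub_eq_zero.mp this
  -- the four inner products with x i, x j
  set α : ℝ := ⟪r₁, r₁⟫_ℝ with hαdef
  set β : ℝ := ⟪r₁, r₂⟫_ℝ with hβdef
  set δ : ℝ := ⟪r₂, r₂⟫_ℝ with hδdef
  have hr1xi : ⟪r₁, x i⟫_ℝ = α := by
    have h0 : ⟪r₁, x i - r₁⟫_ℝ = 0 := aux_orth S r₁ hr₁.2 _ hr₁.1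
    have h1 := inner_sub_right (𝕜 := ℝ) r₁ (x i) r₁
    rw [hαdef]
    have : (⟪r₁, x i - r₁⟫_ℝ : ℝ) = ⟪r₁, x i⟫_ℝ - ⟪r₁, r₁⟫_ℝ := h1
    linarith [h0, this]
  have hr1xj : ⟪r₁, x j⟫_ℝ = β := by
    have h0 : ⟪r₁, x j - r₂⟫_ℝ = 0 := aux_orth S r₁ hr₁.2 _ hr₂.1
    have h1 : (⟪r₁, x j - r₂⟫_ℝ : ℝ) = ⟪r₁, x j⟫_ℝ - ⟪r₁, r₂⟫_ℝ :=
      inner_sub_right (𝕜 := ℝ) r₁ (x j) r₂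
    rw [hβdef]
    linarith [h0, h1]
  have hr2xi : ⟪r₂, x i⟫_ℝ = β := by
    have h0 : ⟪r₂, x i - r₁⟫_ℝ = 0 := aux_orth S r₂ hr₂.2 _ hr₁.1
    have h1 : (⟪r₂, x i - r₁⟫_ℝ : ℝ) = ⟪r₂, x i⟫_ℝ - ⟪r₂, r₁⟫_ℝ :=
      inner_sub_right (𝕜 := ℝ) r₂ (x i) r₁
    have h2 : ⟪r₂, r₁⟫_ℝ = β := by rw [real_inner_comm, hβdef]
    linarith [h0, h1, h2]
  have hr2xj : ⟪r₂, x j⟫_ℝ = δ := by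
    have h0 : ⟪r₂, x j - r₂⟫_ℝ = 0 := aux_orth S r₂ hr₂.2 _ hr₂.1
    have h1 : (⟪r₂, x j - r₂⟫_ℝ : ℝ) = ⟪r₂, x j⟫_ℝ - ⟪r₂, r₂⟫_ℝ :=
      inner_sub_right (𝕜 := ℝ) r₂ (x j) r₂
    rw [hδdef]
    linarith [h0, h1]
  have hr1d : r₁ = α • y₁ + β • y₂ := by
    have := hdec r₁ hr1N hr₁S
    rwa [hr1xi, hr1xj] at this
  have hr2d : r₂ = β • y₁ + δ • y₂ := by
    have := hdec r₂ hr2N hr₂S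
    rwa [hr2xi, hr2xj] at this
  -- the four equations
  have hE : ∀ (r : H) (k : ℤ × Fin p), IsResidual (x '' {k : ℤ × Fin p | k ≠ i ∧ k ≠ j}) (x k) r →
      ∀ y : H, (∀ z ∈ S, ⟪y, z⟫_ℝ = 0) → ⟪r, y⟫_ℝ = ⟪y, x k⟫_ℝ := by
    intro r k hres y hyS
    have h0 : ⟪y, x k - r⟫_ℝ = 0 := aux_orth S y hyS _ hres.1
    have h1 : (⟪y, x k - r⟫_ℝ : ℝ) = ⟪y, x k⟫_ℝ - ⟪y, r⟫_ℝ :=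
      inner_sub_right (𝕜 := ℝ) y (x k) r
    rw [real_inner_comm]
    linarith [h0, h1]
  have E1 : α * p11 + β * p12 = 1 := by
    have w1 : ⟪r₁, y₁⟫_ℝ = α * p11 + β * p12 := by
      conv_lhs => rw [hr1d]
      rw [inner_add_left, real_inner_smul_left, real_inner_smul_left, hy11, hy21]
    have w2 : ⟪r₁, y₁⟫_ℝ = 1 := by
      rw [hE r₁ i hr₁ y₁ hy1S, hy1x i, if_pos rfl]
    linarith
  have E2 : α * p12 + β * p22 = 0 := by
    have w1 : ⟪r₁, y₂⟫_ℝ = α * p12 + β * p22 := by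
      conv_lhs => rw [hr1d]
      rw [inner_add_left, real_inner_smul_left, real_inner_smul_left, hy12, hy22]
    have w2 : ⟪r₁, y₂⟫_ℝ = 0 := by
      rw [hE r₁ i hr₁ y₂ hy2S, hy2x i, if_neg hij]
    linarith
  have E3 : β * p11 + δ * p12 = 0 := by
    have w1 : ⟪r₂, y₁⟫_ℝ = β * p11 + δ * p12 := by
      conv_lhs => rw [hr2d]
      rw [inner_add_left, real_inner_smul_left, real_inner_smul_left, hy11, hy21]
    have w2 : ⟪r₂, y₁⟫_ℝ = 0 := by
      rw [hE r₂ j hr₂ y₁ hy1S, hy1x j, if_neg (Ne.symm hij)]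
    linarith
  have E4 : β * p12 + δ * p22 = 1 := by
    have w1 : ⟪r₂, y₂⟫_ℝ = β * p12 + δ * p22 := by
      conv_lhs => rw [hr2d]
      rw [inner_add_left, real_inner_smul_left, real_inner_smul_left, hy12, hy22]
    have w2 : ⟪r₂, y₂⟫_ℝ = 1 := by
      rw [hE r₂ j hr₂ y₂ hy2S, hy2x j, if_pos rfl]
    linarith
  -- positivity of diagonal entries
  have hppos : ∀ k : ℤ × Fin p, 0 < ⟪D (e2p p k), e2p p k⟫_ℝ := by
    intro k
    have hek : (e2p p k : ∀ _ : ℤ × Fin p, ℝ) k = 1 := by rw [he]; simp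
    have hDk : D (e2p p k) ≠ 0 := by
      intro h0
      have h1 : e2p p k = 0 := by rw [← hCDv (e2p p k), h0, map_zero]
      rw [h1] at hek
      simpa using hek
    have h2 : ⟪D (e2p p k), e2p p k⟫_ℝ = ⟪C (D (e2p p k)), D (e2p p k)⟫_ℝ := by
      nth_rewrite 2 [← hCDv (e2p p k)]
      exact (hCsa (D (e2p p k)) (D (e2p p k))).symm
    have h3 := hlo (D (e2p p k))
    have h4 : 0 < ‖D (e2p p k)‖ ^ 2 := by
      have h6 : 0 < ‖D (e2p p k)‖ := by
        rw [norm_pos_iff]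
        exact hDk
      positivity
    have h5 : 0 < lamInf * ‖D (e2p p k)‖ ^ 2 := by positivity
    rw [h2]
    linarith
  have hp11pos : 0 < p11 := hppos i
  have hp22pos : 0 < p22 := hppos j
  -- positivity of the residual norms
  have hα0 : 0 ≤ α := real_inner_self_nonneg
  have hδ0 : 0 ≤ δ := real_inner_self_nonneg
  have hαpos : 0 < α := by
    rcases eq_or_lt_of_le hα0 with h | h
    · exfalso
      have hβ : β = 0 := by
        have : β * p22 = 0 := by rw [← h] at E2; linarith
        exact (mul_eq_zero.1 this).resolve_right hp22pos.ne'
      rw [← h, hβ] at E1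
      norm_num at E1
    · exact h
  have hδpos : 0 < δ := by
    rcases eq_or_lt_of_le hδ0 with h | h
    · exfalso
      have hβ : β = 0 := by
        have : β * p11 = 0 := by rw [← h] at E3; linarith
        exact (mul_eq_zero.1 this).resolve_right hp11pos.ne'
      rw [← h, hβ] at E4
      norm_num at E4
    · exact h
  -- solve the linear system
  clear_value α β δ p11 p12 p22
  clear hdec hr1d hr2d hy1x hy2x hy1S hy2S hy11 hy12 hy21 hy22 hTT hTe hAT hATC hAx hA hTdef
    hE hr1xi hr1xj hr2xi hr2xj hinnerE hinnerE' he hr₁S hr₂S hTN hxN hCDv hDsa hp21 hMN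
    hr1N hr2N hC hCsa hlo hhi hCD hDC hr₁ hr₂ hInf hSup hppos
  obtain ⟨Δ, hΔdef⟩ : ∃ d : ℝ, d = p11 * p22 - p12 * p12 := ⟨_, rfl⟩
  have hαΔ : α * Δ = p22 := by rw [hΔdef]; linear_combination p22 * E1 - p12 * E2
  have hδΔ : δ * Δ = p11 := by rw [hΔdef]; linear_combination p11 * E4 - p12 * E3
  have hβΔ : β * Δ = -p12 := by rw [hΔdef]; linear_combination p11 * E2 - p12 * E1
  have hΔpos : 0 < Δ := by
    by_contra hle
    push_neg at hle
    have h1 : α * Δ ≤ 0 := mul_nonpos_of_nonneg_of_nonpos hαpos.le hle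
    rw [hαΔ] at h1
    exact absurd h1 (not_le.mpr hp22pos)
  have hαv : α = p22 / Δ := by rw [eq_div_iff hΔpos.ne']; exact hαΔ
  have hδv : δ = p11 / Δ := by rw [eq_div_iff hΔpos.ne']; exact hδΔ
  have hβv : β = -p12 / Δ := by rw [eq_div_iff hΔpos.ne']; exact hβΔ
  have hsqrt : Real.sqrt (α * δ) = Real.sqrt (p11 * p22) / Δ := by
    rw [hαv, hδv, show p22 / Δ * (p11 / Δ) = p11 * p22 / Δ ^ 2 by ring,
      Real.sqrt_div (by positivity), Real.sqrt_sq hΔpos.le]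
  have hsp : 0 < Real.sqrt (p11 * p22) := Real.sqrt_pos.2 (by positivity)
  rw [hβv, hsqrt, div_div_div_comm, div_self hΔpos.ne', div_one]
end
end

section
/- (Proposition 2.1(ii).) Under Assumption 2.1, fix 1 ≤ a ≤ p. For t ≠ τ define ρ^{(a,a)}_{t,τ} = ⟨x_{(t,a)} − P x_{(t,a)}, x_{(τ,a)} − P x_{(τ,a)}⟩ where P is the orthogonal projection onto the closed linear span of {x_{(s,c)} : (s,c) ∉ {(t,a),(τ,a)}}, and define ρ^{(a,a)}_{t,t} as the squared distance from x_{(t,a)} to the closed linear span of {x_{(s,c)} : (s,c) ≠ (t,a)}. Then the block D_{a,a} of the inverse Gram operator is Toeplitz if and only if ρ^{(a,a)}_{t,τ} = ρ^{(a,a)}_{0,t−τ} for all t, τ ∈ ℤ. -/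
open scoped InnerProductSpace
open scoped ENNReal

noncomputable section

lemma e2p_apply (p : ℕ) (i j : ℤ × Fin p) : (e2p p i) j = if j = i then 1 else 0 := by
  classical
  simp [e2p, lp.single_apply, Pi.single_apply]

lemma inner_e2p_left (p : ℕ) (i : ℤ × Fin p) (f : Ell2p p) : ⟪e2p p i, f⟫_ℝ = f i := by
  classical
  simp [e2p, lp.inner_single_left]

lemma inner_e2p_right (p : ℕ) (i : ℤ × Fin p) (f : Ell2p p) : ⟪f, e2p p i⟫_ℝ = f i := by
  classical
  simp [e2p, lp.inner_single_right]

lemma single_eq_smul_e2p (p : ℕ) (i : ℤ × Fin p) (c : ℝ) :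
    lp.single 2 i c = c • e2p p i := by
  classical
  rw [e2p, ← lp.single_smul]
  norm_num


lemma norm_sum_sq_le {H : Type*} [NormedAddCommGroup H] [InnerProductSpace ℝ H]
    {p : ℕ} (x : ℤ × Fin p → H) {lamSup : ℝ} (hSup : lamSup ∈ upperBounds (gramQuadSet x))
    (c : ℤ × Fin p → ℝ) (F : Finset (ℤ × Fin p)) :
    ‖∑ i ∈ F, c i • x i‖ ^ 2 ≤ lamSup * ∑ i ∈ F, (c i) ^ 2 := by
  classical
  set s := ∑ i ∈ F, (c i) ^ 2 with hs
  have hs0 : 0 ≤ s := Finset.sum_nonneg fun i _ => sq_nonneg _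
  rcases eq_or_lt_of_le hs0 with h0 | h0
  · have hz : ∀ i ∈ F, c i = 0 := by
      intro i hi
      have := (Finset.sum_eq_zero_iff_of_nonneg (fun i _ => sq_nonneg (c i))).mp h0.symm i hi
      exact pow_eq_zero_iff (two_ne_zero) |>.mp this
    have : ∑ i ∈ F, c i • x i = 0 := Finset.sum_eq_zero fun i hi => by rw [hz i hi, zero_smul]
    simp [this, ← hs, ← h0]
  · set cst := Real.sqrt s with hcst
    have hcstpos : 0 < cst := Real.sqrt_pos.mpr h0
    set w : (ℤ × Fin p) →₀ ℝ :=
      Finsupp.onFinset F (fun i => if i ∈ F then c i / cst else 0)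
        (fun i hi => by by_contra h; simp [h] at hi) with hw
    have hwapp : ∀ i ∈ F, w i = c i / cst := fun i hi => by simp [hw, hi]
    have hsupp : w.support ⊆ F := Finsupp.support_onFinset_subset
    have hsum1 : ∑ i ∈ w.support, (w i) ^ 2 = 1 := by
      rw [Finset.sum_subset hsupp (fun i _ hi => by
        rw [Finsupp.notMem_support_iff.mp hi]; ring)]
      have : ∑ i ∈ F, (w i) ^ 2 = ∑ i ∈ F, (c i) ^ 2 / cst ^ 2 := by
        refine Finset.sum_congr rfl fun i hi => ?_
        rw [hwapp i hi, div_pow]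
      rw [this, ← Finset.sum_div, ← hs, Real.sq_sqrt hs0, div_self (ne_of_gt h0)]
    have hsumx : ∑ i ∈ w.support, w i • x i = cst⁻¹ • ∑ i ∈ F, c i • x i := by
      rw [Finset.sum_subset hsupp (fun i _ hi => by
        rw [Finsupp.notMem_support_iff.mp hi, zero_smul])]
      rw [Finset.smul_sum]
      refine Finset.sum_congr rfl fun i hi => ?_
      rw [hwapp i hi, smul_smul, div_eq_inv_mul]
    have hmem : ‖∑ i ∈ w.support, w i • x i‖ ^ 2 ∈ gramQuadSet x := ⟨w, hsum1, rfl⟩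
    have hle := hSup hmem
    rw [hsumx, norm_smul] at hle
    have : (‖cst⁻¹‖ * ‖∑ i ∈ F, c i • x i‖) ^ 2
        = ‖∑ i ∈ F, c i • x i‖ ^ 2 / s := by
      rw [mul_pow, Real.norm_eq_abs, abs_of_pos (inv_pos.mpr hcstpos), div_eq_mul_inv, mul_comm]
      rw [show cst⁻¹ ^ 2 = (cst ^ 2)⁻¹ from inv_pow cst 2, hcst, Real.sq_sqrt hs0]
    rw [this] at hle
    rw [div_le_iff₀ h0] at hle
    linarith

lemma summable_smul_x {H : Type*} [NormedAddCommGroup H] [InnerProductSpace ℝ H]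
    [CompleteSpace H] {p : ℕ} (x : ℤ × Fin p → H) {lamSup : ℝ}
    (hSup : lamSup ∈ upperBounds (gramQuadSet x)) (hSupPos : 0 < lamSup)
    (v : Ell2p p) : Summable fun i => v i • x i := by
  classical
  rw [summable_iff_cauchySeq_finset, cauchySeq_finset_iff_vanishing_norm]
  intro ε hε
  have hv2 : Summable (fun i : ℤ × Fin p => (v i) ^ 2) := by
    have h := (lp.memℓp v).summable (p := 2) (by norm_num)
    refine h.congr fun i => ?_
    rw [show ((2 : ℝ≥0∞).toReal) = (2 : ℝ) by norm_num]
    rw [show ‖v i‖ ^ (2:ℝ) = ‖v i‖ ^ (2:ℕ) by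
      rw [← Real.rpow_natCast]; norm_num]
    rw [Real.norm_eq_abs, sq_abs]
  have hvan := cauchySeq_finset_iff_vanishing_norm.mp
    (summable_iff_cauchySeq_finset.mp hv2) (ε ^ 2 / lamSup)
    (div_pos (pow_pos hε 2) hSupPos)
  obtain ⟨s, hs⟩ := hvan
  refine ⟨s, fun t ht => ?_⟩
  have h1 : ‖∑ i ∈ t, v i • x i‖ ^ 2 ≤ lamSup * ∑ i ∈ t, (v i) ^ 2 :=
    norm_sum_sq_le x hSup _ t
  have h2 : ∑ i ∈ t, (v i) ^ 2 < ε ^ 2 / lamSup := by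
    have := hs t ht
    calc ∑ i ∈ t, (v i) ^ 2 ≤ ‖∑ i ∈ t, (v i) ^ 2‖ := le_abs_self _
    _ < _ := this
  have h3 : ‖∑ i ∈ t, v i • x i‖ ^ 2 < ε ^ 2 := by
    calc ‖∑ i ∈ t, v i • x i‖ ^ 2 ≤ lamSup * ∑ i ∈ t, (v i) ^ 2 := h1
    _ < lamSup * (ε ^ 2 / lamSup) := by
        exact (mul_lt_mul_iff_right₀ hSupPos).mpr h2
    _ = ε ^ 2 := by field_simp
  exact lt_of_pow_lt_pow_left₀ 2 hε.le h3

set_option maxHeartbeats 2000000 in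
/-- **Proposition 2.1(ii).** The diagonal block `D_{a,a}` is Toeplitz iff the
partial covariances `ρ^{(a,a)}_{t,τ}` are shift invariant. -/
theorem statement_5
    {H : Type*} [NormedAddCommGroup H] [InnerProductSpace ℝ H] [CompleteSpace H]
    (p : ℕ) (hp : 1 ≤ p) (x : ℤ × Fin p → H)
    (lamInf lamSup : ℝ)
    (hInf : IsGLB (gramQuadSet x) lamInf)
    (hSup : IsLUB (gramQuadSet x) lamSup)
    (hpos : 0 < lamInf)
    (C : Ell2p p →L[ℝ] Ell2p p)
    (hC : ∀ i j : ℤ × Fin p, ⟪C (e2p p j), e2p p i⟫_ℝ = ⟪x i, x j⟫_ℝ)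
    (hCsa : ∀ u v : Ell2p p, ⟪C u, v⟫_ℝ = ⟪u, C v⟫_ℝ)
    (hlo : ∀ v : Ell2p p, lamInf * ‖v‖ ^ 2 ≤ ⟪C v, v⟫_ℝ)
    (hhi : ∀ v : Ell2p p, ⟪C v, v⟫_ℝ ≤ lamSup * ‖v‖ ^ 2)
    (D : Ell2p p →L[ℝ] Ell2p p)
    (hCD : C.comp D = ContinuousLinearMap.id ℝ (Ell2p p))
    (hDC : D.comp C = ContinuousLinearMap.id ℝ (Ell2p p))
    (a : Fin p)
    (r : ℤ → ℤ → H)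
    (hr : ∀ t τ : ℤ, t ≠ τ →
        IsResidual (x '' {k : ℤ × Fin p | k ≠ (t, a) ∧ k ≠ (τ, a)}) (x (t, a)) (r t τ))
    (rd : ℤ → H)
    (hrd : ∀ t : ℤ, IsResidual (x '' {k : ℤ × Fin p | k ≠ (t, a)}) (x (t, a)) (rd t))
    (ρ : ℤ → ℤ → ℝ)
    (hρoff : ∀ t τ : ℤ, t ≠ τ → ρ t τ = ⟪r t τ, r τ t⟫_ℝ)
    (hρdiag : ∀ t : ℤ, ρ t t = ‖rd t‖ ^ 2) :
    (∀ t τ : ℤ, ⟪D (e2p p (τ, a)), e2p p (t, a)⟫_ℝ =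
        ⟪D (e2p p (τ + 1, a)), e2p p (t + 1, a)⟫_ℝ) ↔
    (∀ t τ : ℤ, ρ t τ = ρ 0 (t - τ)) := by
  classical
  -- basic consequences of invertibility
  have hCapp : ∀ z : Ell2p p, C (D z) = z := fun z => by
    have := ContinuousLinearMap.ext_iff.mp hCD z
    simpa using this
  have hDsym : ∀ u v : Ell2p p, ⟪D u, v⟫_ℝ = ⟪u, D v⟫_ℝ := by
    intro u v
    conv_lhs => rw [show v = C (D v) from (hCapp v).symm]
    rw [← hCsa, hCapp]
  -- lamSup is positive
  have hSupPos : 0 < lamSup := by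
    set i0 : ℤ × Fin p := (0, ⟨0, hp⟩)
    have hmem : ‖x i0‖ ^ 2 ∈ gramQuadSet x := by
      refine ⟨Finsupp.single i0 1, ?_, ?_⟩
      · rw [Finsupp.support_single_ne_zero i0 one_ne_zero]
        simp
      · rw [Finsupp.support_single_ne_zero i0 one_ne_zero]
        simp
    have h1 := hInf.1 hmem
    have h2 := hSup.1 hmem
    linarith
  -- the synthesis map T
  have sumT : ∀ v : Ell2p p, Summable fun i => v i • x i :=
    fun v => summable_smul_x x hSup.1 hSupPos v
  set T : Ell2p p → H := fun v => ∑' i, v i • x i with hTdef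
  have hT : ∀ v : Ell2p p, HasSum (fun i => v i • x i) (T v) := fun v => (sumT v).hasSum
  have hTe : ∀ i, T (e2p p i) = x i := by
    intro i
    refine HasSum.unique (hT _) ?_
    have : (fun j => (e2p p i) j • x j) = fun j => if j = i then x i else 0 := by
      funext j
      by_cases h : j = i
      · subst h; simp [e2p_apply]
      · simp [e2p_apply, h]
    rw [this]
    exact hasSum_ite_eq i (x i)
  have Tsmul : ∀ (c : ℝ) (z : Ell2p p), T (c • z) = c • T z := by
    intro c z
    refine HasSum.unique (hT _) ?_
    have h := (hT z).const_smul c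
    have he : (fun i => ((c • z : Ell2p p) : ∀ _, ℝ) i • x i) = fun i => c • (z i • x i) := by
      funext i
      rw [lp.coeFn_smul, Pi.smul_apply, smul_assoc]
    rw [he]; exact h
  have Tadd : ∀ z z' : Ell2p p, T (z + z') = T z + T z' := by
    intro z z'
    refine HasSum.unique (hT _) ?_
    have h := (hT z).add (hT z')
    have he : (fun i => ((z + z' : Ell2p p) : ∀ _, ℝ) i • x i)
        = fun i => z i • x i + z' i • x i := by
      funext i
      rw [lp.coeFn_add, Pi.add_apply, add_smul]
    rw [he]; exact h
  have Tsub : ∀ z z' : Ell2p p, T (z - z') = T z - T z' := by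
    intro z z'
    refine HasSum.unique (hT _) ?_
    have h := (hT z).sub (hT z')
    have he : (fun i => ((z - z' : Ell2p p) : ∀ _, ℝ) i • x i)
        = fun i => z i • x i - z' i • x i := by
      funext i
      rw [lp.coeFn_sub, Pi.sub_apply, sub_smul]
    rw [he]; exact h
  -- inner products against T
  have key1 : ∀ (v : Ell2p p) (z : H),
      HasSum (fun i => v i * ⟪x i, z⟫_ℝ) ⟪T v, z⟫_ℝ := by
    intro v z
    have h := (hT v).mapL (innerSL ℝ z)
    have he : (fun i => (innerSL ℝ z) (v i • x i)) = fun i => v i * ⟪x i, z⟫_ℝ := by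
      funext i
      simp [real_inner_smul_right, real_inner_comm]
    rw [he] at h
    have hv : (innerSL ℝ z) (T v) = ⟪T v, z⟫_ℝ := by
      simp [real_inner_comm]
    rwa [hv] at h
  -- expansion of elements of lp in terms of singles, mapped by a functional
  have key2 : ∀ (v : Ell2p p) (k : ℤ × Fin p),
      HasSum (fun i => v i * ⟪C (e2p p i), e2p p k⟫_ℝ) ⟪C v, e2p p k⟫_ℝ := by
    intro v k
    have hbase : HasSum (fun i => lp.single 2 i (v i)) v := lp.hasSum_single (by norm_num) v
    have h := hbase.mapL ((innerSL ℝ (e2p p k)).comp C)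
    have he : (fun i => ((innerSL ℝ (e2p p k)).comp C) (lp.single 2 i (v i)))
        = fun i => v i * ⟪C (e2p p i), e2p p k⟫_ℝ := by
      funext i
      rw [single_eq_smul_e2p]
      simp [real_inner_smul_right, real_inner_comm]
    rw [he] at h
    have hv : ((innerSL ℝ (e2p p k)).comp C) v = ⟪C v, e2p p k⟫_ℝ := by
      simp [real_inner_comm]
    rwa [hv] at h
  have lemA : ∀ (v : Ell2p p) (k : ℤ × Fin p), ⟪x k, T v⟫_ℝ = ⟪C v, e2p p k⟫_ℝ := by
    intro v k
    have h1 := key1 v (x k)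
    have h2 := key2 v k
    have he : (fun i => v i * ⟪C (e2p p i), e2p p k⟫_ℝ)
        = fun i => v i * ⟪x i, x k⟫_ℝ := by
      funext i
      rw [hC k i, real_inner_comm]
    rw [he] at h2
    rw [real_inner_comm]
    exact h1.unique h2
  have lemB : ∀ (v : Ell2p p) (w : ℤ × Fin p), ⟪T v, T (D (e2p p w))⟫_ℝ = v w := by
    intro v w
    have h1 := key1 v (T (D (e2p p w)))
    have he : (fun i => v i * ⟪x i, T (D (e2p p w))⟫_ℝ)
        = fun i => if i = w then v w else 0 := by
      funext i
      rw [lemA, hCapp, inner_e2p_right, e2p_apply]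
      by_cases h : i = w
      · subst h; simp
      · simp [h]
    rw [he] at h1
    exact h1.unique (hasSum_ite_eq w (v w))
  -- membership of T v in closed spans
  have memT : ∀ (v : Ell2p p) (P : ℤ × Fin p → Prop), (∀ i, ¬ P i → v i = 0) →
      T v ∈ (Submodule.span ℝ (x '' {k | P k})).topologicalClosure := by
    intro v P hv
    set K := Submodule.span ℝ (x '' {k | P k})
    have hmem : ∀ s : Finset (ℤ × Fin p), (∑ i ∈ s, v i • x i) ∈ K := by
      intro s
      refine Submodule.sum_mem _ fun i _ => ?_
      by_cases h : P i
      · exact Submodule.smul_mem _ _ (Submodule.subset_span ⟨i, h, rfl⟩)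
      · rw [hv i h, zero_smul]; exact Submodule.zero_mem _
    have hcl : T v ∈ closure (K : Set H) :=
      mem_closure_of_tendsto (hT v) (Filter.Eventually.of_forall hmem)
    rwa [← Submodule.topologicalClosure_coe] at hcl
  -- uniqueness of residuals
  have resUnique : ∀ (S : Set H) (y r1 r2 : H),
      IsResidual S y r1 → IsResidual S y r2 → r1 = r2 := by
    intro S y r1 r2 h1 h2
    set w := r1 - r2 with hwdef
    have hmem : w ∈ (Submodule.span ℝ S).topologicalClosure := by
      have := Submodule.sub_mem _ h2.1 h1.1
      simpa [hwdef, sub_sub_sub_cancel_left] using this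
    have horth : ∀ z ∈ S, ⟪w, z⟫_ℝ = 0 := by
      intro z hz
      rw [hwdef, inner_sub_left, h1.2 z hz, h2.2 z hz, sub_zero]
    have hker : (Submodule.span ℝ S).topologicalClosure ≤ LinearMap.ker (innerSL ℝ w).toLinearMap := by
      refine Submodule.topologicalClosure_minimal _ ?_ (ContinuousLinearMap.isClosed_ker _)
      rw [Submodule.span_le]
      intro z hz
      exact horth z hz
    have : ⟪w, w⟫_ℝ = 0 := hker hmem
    have := inner_self_eq_zero.mp this
    rw [hwdef, sub_eq_zero] at this
    exact this
  -- matrix entries of D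
  set dm : (ℤ × Fin p) → (ℤ × Fin p) → ℝ := fun i j => ⟪D (e2p p j), e2p p i⟫_ℝ with hdm
  have entry : ∀ i j, (D (e2p p j)) i = dm i j := by
    intro i j
    exact (inner_e2p_right p i (D (e2p p j))).symm
  have dmsym : ∀ i j, dm i j = dm j i := by
    intro i j
    exact (hDsym (e2p p j) (e2p p i)).trans (real_inner_comm _ _)
  have innerE : ∀ i j : ℤ × Fin p, ⟪e2p p i, e2p p j⟫_ℝ = if i = j then 1 else 0 := by
    intro i j
    rw [inner_e2p_left, e2p_apply]
  -- positivity of D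
  have hDposv : ∀ v : Ell2p p, v ≠ 0 → 0 < ⟪D v, v⟫_ℝ := by
    intro v hv
    have hq : D v ≠ 0 := by
      intro h
      apply hv
      rw [← hCapp v, h, map_zero]
    have h1 : ⟪D v, v⟫_ℝ = ⟪C (D v), D v⟫_ℝ := by
      nth_rewrite 2 [show v = C (D v) from (hCapp v).symm]
      exact real_inner_comm _ _
    have h2 := hlo (D v)
    have h3 : (0:ℝ) < lamInf * ‖D v‖ ^ 2 :=
      mul_pos hpos (pow_pos (norm_pos_iff.mpr hq) 2)
    linarith [h1 ▸ (lt_of_lt_of_le h3 h2)]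
  have e2pne : ∀ i : ℤ × Fin p, e2p p i ≠ 0 := by
    intro i h
    have := innerE i i
    rw [h, inner_zero_left] at this
    simp at this
  have dmpos : ∀ i, 0 < dm i i := by
    intro i
    exact hDposv (e2p p i) (e2pne i)
  have detpos : ∀ i j, i ≠ j → 0 < dm i i * dm j j - dm i j * dm j i := by
    intro i j hij
    set v : Ell2p p := dm i j • e2p p i - dm i i • e2p p j with hv
    have hvne : v ≠ 0 := by
      intro h
      have : ⟪v, e2p p j⟫_ℝ = 0 := by rw [h, inner_zero_left]
      rw [hv, inner_sub_left, real_inner_smul_left, real_inner_smul_left,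
        innerE i j, innerE j j, if_neg hij, if_pos rfl] at this
      simp at this
      exact (dmpos i).ne' this
    have hpos2 := hDposv v hvne
    have hexp : ⟪D v, v⟫_ℝ = dm i i * (dm i i * dm j j - dm i j * dm j i) := by
      rw [hv]
      rw [map_sub, map_smul, map_smul]
      rw [inner_sub_left, inner_sub_right, inner_sub_right]
      rw [real_inner_smul_left, real_inner_smul_left, real_inner_smul_left,
        real_inner_smul_left, real_inner_smul_right, real_inner_smul_right,
        real_inner_smul_right, real_inner_smul_right]
      rw [show ⟪D (e2p p i), e2p p i⟫_ℝ = dm i i from rfl,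
        show ⟪D (e2p p i), e2p p j⟫_ℝ = dm j i from rfl,
        show ⟪D (e2p p j), e2p p i⟫_ℝ = dm i j from rfl,
        show ⟪D (e2p p j), e2p p j⟫_ℝ = dm j j from rfl]
      rw [← dmsym i j]
      ring
    rw [hexp] at hpos2
    nlinarith [dmpos i]
  -- the diagonal residual
  have hrhoDiag : ∀ t : ℤ, ρ t t = (dm (t, a) (t, a))⁻¹ := by
    intro t
    set u : ℤ × Fin p := (t, a) with hu
    have hduu : dm u u ≠ 0 := (dmpos u).ne'
    set vv : Ell2p p := (dm u u)⁻¹ • D (e2p p u) with hvv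
    have hvu : vv u = 1 := by
      rw [hvv, lp.coeFn_smul, Pi.smul_apply, smul_eq_mul, entry, inv_mul_cancel₀ hduu]
    have hres : IsResidual (x '' {k : ℤ × Fin p | k ≠ u}) (x u) (T vv) := by
      constructor
      · have : x u - T vv = T (e2p p u - vv) := by
          rw [Tsub, hTe]
        rw [this]
        refine memT _ (fun k => k ≠ u) fun i hi => ?_
        have hiu : i = u := not_not.mp hi
        subst hiu
        rw [lp.coeFn_sub, Pi.sub_apply, e2p_apply, if_pos rfl, hvu, sub_self]
      · rintro z ⟨k, hk, rfl⟩
        rw [real_inner_comm, lemA, hvv, map_smul, real_inner_smul_left, hCapp,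
          innerE, if_neg (Ne.symm hk)]
        ring
    have hrdt : rd t = T vv := resUnique _ _ _ _ (hrd t) hres
    have hnorm : ‖rd t‖ ^ 2 = ⟪T vv, T vv⟫_ℝ := by
      rw [hrdt, real_inner_self_eq_norm_sq]
    rw [hρdiag t, hnorm]
    have h1 : ⟪T vv, T vv⟫_ℝ = (dm u u)⁻¹ * ⟪T vv, T (D (e2p p u))⟫_ℝ := by
      nth_rewrite 2 [hvv]
      rw [Tsmul, real_inner_smul_right]
    rw [h1, lemB, hvu, mul_one]
  -- the off-diagonal residuals
  have pairNe : ∀ t τ : ℤ, t ≠ τ → ((t, a) : ℤ × Fin p) ≠ (τ, a) := by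
    intro t τ h hc
    exact h (congrArg Prod.fst hc)
  -- general construction: for u ≠ w, the residual of x u on the complement of {u, w}
  have resPair : ∀ u w : ℤ × Fin p, u ≠ w →
      IsResidual (x '' {k : ℤ × Fin p | k ≠ u ∧ k ≠ w}) (x u)
        (T ((dm w w / (dm u u * dm w w - dm u w * dm w u)) • D (e2p p u)
          - (dm w u / (dm u u * dm w w - dm u w * dm w u)) • D (e2p p w))) ∧
      ((dm w w / (dm u u * dm w w - dm u w * dm w u)) • D (e2p p u)
          - (dm w u / (dm u u * dm w w - dm u w * dm w u)) • D (e2p p w)) u = 1 ∧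
      ((dm w w / (dm u u * dm w w - dm u w * dm w u)) • D (e2p p u)
          - (dm w u / (dm u u * dm w w - dm u w * dm w u)) • D (e2p p w)) w = 0 := by
    intro u w huw
    set det := dm u u * dm w w - dm u w * dm w u with hdet
    have hdetpos := detpos u w huw
    have hdetne : det ≠ 0 := hdetpos.ne'
    set vv : Ell2p p := (dm w w / det) • D (e2p p u) - (dm w u / det) • D (e2p p w) with hvv
    have happ : ∀ i, vv i = (dm w w / det) * dm i u - (dm w u / det) * dm i w := by
      intro i
      rw [hvv, lp.coeFn_sub, Pi.sub_apply, lp.coeFn_smul, lp.coeFn_smul,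
        Pi.smul_apply, Pi.smul_apply, smul_eq_mul, smul_eq_mul, entry, entry]
    have hvu : vv u = 1 := by
      rw [happ u]
      have hnum : dm w w / det * dm u u - dm w u / det * dm u w
          = (dm u u * dm w w - dm u w * dm w u) / det := by
        rw [dmsym u w]
        ring
      rw [hnum, ← hdet, div_self hdetne]
    have hvw : vv w = 0 := by
      rw [happ w]
      ring
    refine ⟨⟨?_, ?_⟩, hvu, hvw⟩
    · have : x u - T vv = T (e2p p u - vv) := by
        rw [Tsub (e2p p u) vv, hTe]
      rw [this]
      refine memT _ (fun k => k ≠ u ∧ k ≠ w) fun i hi => ?_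
      rw [lp.coeFn_sub, Pi.sub_apply]
      rcases not_and_or.mp hi with h | h
      · have hiu : i = u := not_not.mp h
        subst hiu
        rw [e2p_apply, if_pos rfl, hvu, sub_self]
      · have hiw : i = w := not_not.mp h
        subst hiw
        rw [e2p_apply, if_neg (Ne.symm huw), hvw, sub_self]
    · rintro z ⟨k, hk, rfl⟩
      rw [real_inner_comm, lemA, hvv, map_sub, map_smul, map_smul, inner_sub_left,
        real_inner_smul_left, real_inner_smul_left, hCapp, hCapp,
        innerE, innerE, if_neg (Ne.symm hk.1), if_neg (Ne.symm hk.2)]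
      ring
  have hrhoOff : ∀ t τ : ℤ, t ≠ τ →
      ρ t τ = -(dm (τ, a) (t, a)) /
        (dm (τ, a) (τ, a) * dm (t, a) (t, a) - dm (τ, a) (t, a) * dm (t, a) (τ, a)) := by
    intro t τ htτ
    set u : ℤ × Fin p := (t, a) with hu
    set w : ℤ × Fin p := (τ, a) with hw
    have huw : u ≠ w := pairNe t τ htτ
    obtain ⟨hres1, hv1u, hv1w⟩ := resPair u w huw
    obtain ⟨hres2, hv2w, hv2u⟩ := resPair w u huw.symm
    have hr1 : r t τ = T ((dm w w / (dm u u * dm w w - dm u w * dm w u)) • D (e2p p u)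
        - (dm w u / (dm u u * dm w w - dm u w * dm w u)) • D (e2p p w)) :=
      resUnique _ _ _ _ (hr t τ htτ) hres1
    have hr2 : r τ t = T ((dm u u / (dm w w * dm u u - dm w u * dm u w)) • D (e2p p w)
        - (dm u w / (dm w w * dm u u - dm w u * dm u w)) • D (e2p p u)) := by
      refine resUnique _ _ _ _ (hr τ t htτ.symm) ?_
      exact hres2
    rw [hρoff t τ htτ, hr1, hr2]
    set v1 : Ell2p p := (dm w w / (dm u u * dm w w - dm u w * dm w u)) • D (e2p p u)
        - (dm w u / (dm u u * dm w w - dm u w * dm w u)) • D (e2p p w) with hv1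
    have hexp : T ((dm u u / (dm w w * dm u u - dm w u * dm u w)) • D (e2p p w)
        - (dm u w / (dm w w * dm u u - dm w u * dm u w)) • D (e2p p u))
        = (dm u u / (dm w w * dm u u - dm w u * dm u w)) • T (D (e2p p w))
        - (dm u w / (dm w w * dm u u - dm w u * dm u w)) • T (D (e2p p u)) := by
      rw [Tsub, Tsmul, Tsmul]
    rw [hexp, inner_sub_right, real_inner_smul_right, real_inner_smul_right,
      lemB, lemB, hv1u, hv1w]
    rw [dmsym u w]
    ring
  -- diagonal entries via ρ are controlled; now prove the equivalence
  have diagKey : (∀ t τ : ℤ, ρ t τ = ρ 0 (t - τ)) →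
      ∀ s : ℤ, dm (s, a) (s, a) = dm (0, a) (0, a) := by
    intro hSh s
    have h1 : ρ s s = ρ 0 0 := by
      have := hSh s s
      rwa [sub_self] at this
    rw [hrhoDiag s, hrhoDiag 0] at h1
    exact inv_injective h1
  constructor
  · -- Toeplitz implies shift invariance of ρ
    intro hTz
    have hTz' : ∀ t τ : ℤ, dm (t, a) (τ, a) = dm (t + 1, a) (τ + 1, a) := hTz
    have shift : ∀ n t τ : ℤ, dm (t, a) (τ, a) = dm (t + n, a) (τ + n, a) := by
      intro n
      induction n using Int.induction_on with
      | zero => intro t τ; norm_num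
      | succ n ih =>
        intro t τ
        rw [show t + ((n : ℤ) + 1) = t + n + 1 from by ring,
          show τ + ((n : ℤ) + 1) = τ + n + 1 from by ring, ih t τ]
        exact hTz' (t + n) (τ + n)
      | pred n ih =>
        intro t τ
        rw [show t + (-(n : ℤ) - 1) = t + -n - 1 from by ring,
          show τ + (-(n : ℤ) - 1) = τ + -n - 1 from by ring, ih t τ]
        have := hTz' (t + -n - 1) (τ + -n - 1)
        rw [show t + -(n : ℤ) - 1 + 1 = t + -n from by ring,
          show τ + -(n : ℤ) - 1 + 1 = τ + -n from by ring] at this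
        exact this.symm
    have gdiag : ∀ t : ℤ, dm (t, a) (t, a) = dm (0, a) (0, a) := by
      intro t
      have := shift t 0 0
      simpa using this.symm
    intro t τ
    by_cases h : t = τ
    · subst h
      rw [sub_self, hrhoDiag t, hrhoDiag 0, gdiag t]
    · have hsub : t - τ ≠ 0 := sub_ne_zero.mpr h
      rw [hrhoOff t τ h, hrhoOff 0 (t - τ) (Ne.symm hsub)]
      have e1 : dm (t - τ, a) (0, a) = dm (t, a) (τ, a) := by
        have := shift τ (t - τ) 0
        rw [show t - τ + τ = t from by ring, show (0 : ℤ) + τ = τ from by ring] at this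
        exact this
      have e2 : dm ((0 : ℤ), a) (t - τ, a) = dm (τ, a) (t, a) := by
        have := shift τ 0 (t - τ)
        rw [show t - τ + τ = t from by ring, show (0 : ℤ) + τ = τ from by ring] at this
        exact this
      rw [e1, e2, gdiag t, gdiag τ, gdiag (t - τ), dmsym (τ, a) (t, a)]
  · -- shift invariance of ρ implies Toeplitz
    intro hSh t τ
    show dm (t, a) (τ, a) = dm (t + 1, a) (τ + 1, a)
    have diag := diagKey hSh
    by_cases h : t = τ
    · subst h
      rw [diag t, diag (t + 1)]
    · have h1 : t + 1 ≠ τ + 1 := fun hc => h (by omega)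
      have hr1 := hrhoOff t τ h
      have hr2 := hrhoOff (t + 1) (τ + 1) h1
      rw [dmsym (τ, a) (t, a), diag τ, diag t] at hr1
      rw [dmsym (τ + 1, a) (t + 1, a), diag (τ + 1), diag (t + 1)] at hr2
      have heq : ρ t τ = ρ (t + 1) (τ + 1) := by
        rw [hSh t τ, hSh (t + 1) (τ + 1),
          show t + 1 - (τ + 1) = t - τ from by ring]
      have hA := detpos (t, a) (τ, a) (pairNe t τ h)
      have hB := detpos (t + 1, a) (τ + 1, a) (pairNe (t + 1) (τ + 1) h1)
      rw [dmsym (τ, a) (t, a), diag τ, diag t] at hA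
      rw [dmsym (τ + 1, a) (t + 1, a), diag (τ + 1), diag (t + 1)] at hB
      set P : ℝ := dm ((0 : ℤ), a) ((0 : ℤ), a) with hP
      set dd : ℝ := dm (t, a) (τ, a) with hdd
      set dd' : ℝ := dm (t + 1, a) (τ + 1, a) with hdd'
      -- hA : 0 < P * P - dd * dd, hB : 0 < P * P - dd' * dd'
      have heq2 : -dd / (P * P - dd * dd) = -dd' / (P * P - dd' * dd') := by
        rw [← hr1, ← hr2]
        exact heq
      have hcross := (div_eq_div_iff hA.ne' hB.ne').mp heq2
      have hfac : (dd - dd') * (P * P + dd * dd') = 0 := by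
        linear_combination -hcross
      rcases mul_eq_zero.mp hfac with hc | hc
      · exact sub_eq_zero.mp hc
      · exfalso
        nlinarith [sq_nonneg (dd + dd'), hA, hB, hc]
end
end

section
/- (Theorem 2.1(i).) Under Assumption 2.1, fix 1 ≤ a ≤ p and let P_a be the orthogonal projection onto the closed linear span of {x_{(s,c)} : s ∈ ℤ, c ≠ a}. Then for all t, τ ∈ ℤ, the inner product ⟨x_{(t,a)} − P_a x_{(t,a)}, x_{(τ,a)} − P_a x_{(τ,a)}⟩ equals the (t,τ) entry of the inverse of the operator D_{a,a} on ℓ²(ℤ). -/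
open scoped InnerProductSpace

noncomputable section

section AuxiliaryForStatement7

set_option linter.unusedSectionVars false

open scoped ENNReal

variable {H : Type*} [NormedAddCommGroup H] [InnerProductSpace ℝ H] [CompleteSpace H]
variable {ι : Type*} [DecidableEq ι]

/-- Anything orthogonal to every element of `S` is orthogonal to the closed span of `S`. -/
lemma aux_mem_orth_closure_span {S : Set H} {z : H}
    (hz : ∀ s ∈ S, ⟪z, s⟫_ℝ = 0) :
    z ∈ ((Submodule.span ℝ S).topologicalClosure)ᗮ := by
  rw [Submodule.mem_orthogonal']
  intro u hu
  have h1 : Submodule.span ℝ S ≤ LinearMap.ker ((innerSL ℝ z : H →L[ℝ] ℝ) : H →ₗ[ℝ] ℝ) := by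
    rw [Submodule.span_le]
    intro s hs
    simpa [LinearMap.mem_ker] using hz s hs
  have h2 := Submodule.topologicalClosure_minimal _ h1 (ContinuousLinearMap.isClosed_ker _)
  simpa [LinearMap.mem_ker] using h2 hu

/-- Bessel-type bound on finite sums of squared inner products. -/
lemma aux_bessel_finset {y : ι → H} {B : ℝ} (hB : 0 ≤ B)
    (hy : ∀ (F : Finset ι) (c : ι → ℝ),
      ‖∑ i ∈ F, c i • y i‖ ^ 2 ≤ B * ∑ i ∈ F, c i ^ 2)
    (h : H) (F : Finset ι) :
    ∑ i ∈ F, ⟪h, y i⟫_ℝ ^ 2 ≤ B * ‖h‖ ^ 2 := by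
  set c : ι → ℝ := fun i => ⟪h, y i⟫_ℝ with hc
  set s := ∑ i ∈ F, c i ^ 2 with hs
  have hs0 : 0 ≤ s := Finset.sum_nonneg fun i _ => sq_nonneg _
  have key : s = ⟪h, ∑ i ∈ F, c i • y i⟫_ℝ := by
    rw [inner_sum]
    refine Finset.sum_congr rfl fun i _ => ?_
    rw [real_inner_smul_right]; ring
  have h1 : s ≤ ‖h‖ * ‖∑ i ∈ F, c i • y i‖ := key ▸ real_inner_le_norm _ _
  have h2 : ‖∑ i ∈ F, c i • y i‖ ^ 2 ≤ B * s := hy F c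
  rcases eq_or_lt_of_le hs0 with h0 | h0
  · rw [← h0]
    positivity
  · have hsq : s * s ≤ (B * ‖h‖ ^ 2) * s := by
      calc s * s ≤ (‖h‖ * ‖∑ i ∈ F, c i • y i‖) * (‖h‖ * ‖∑ i ∈ F, c i • y i‖) :=
            mul_self_le_mul_self hs0 h1
        _ = ‖h‖ ^ 2 * ‖∑ i ∈ F, c i • y i‖ ^ 2 := by ring
        _ ≤ ‖h‖ ^ 2 * (B * s) := mul_le_mul_of_nonneg_left h2 (sq_nonneg _)
        _ = (B * ‖h‖ ^ 2) * s := by ring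
    exact le_of_mul_le_mul_right hsq h0

set_option linter.unusedSectionVars false

lemma aux_memlp {y : ι → H} {B : ℝ} (hB : 0 ≤ B)
    (hy : ∀ (F : Finset ι) (c : ι → ℝ),
      ‖∑ i ∈ F, c i • y i‖ ^ 2 ≤ B * ∑ i ∈ F, c i ^ 2)
    (h : H) : Memℓp (fun i => ⟪h, y i⟫_ℝ) 2 := by
  apply memℓp_gen
  have hkey : ∀ i : ι, ‖⟪h, y i⟫_ℝ‖ ^ (2 : ℝ≥0∞).toReal = ⟪h, y i⟫_ℝ ^ 2 := by
    intro i
    rw [ENNReal.toReal_ofNat, Real.rpow_two, Real.norm_eq_abs, sq_abs]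
  simp only [hkey]
  exact summable_of_sum_le (fun i => sq_nonneg _) (fun F => aux_bessel_finset hB hy h F)

/-- The analysis (coefficient) operator attached to a Bessel family. -/
def analysisCLM (y : ι → H) (B : ℝ) (hB : 0 ≤ B)
    (hy : ∀ (F : Finset ι) (c : ι → ℝ),
      ‖∑ i ∈ F, c i • y i‖ ^ 2 ≤ B * ∑ i ∈ F, c i ^ 2) :
    H →L[ℝ] lp (fun _ : ι => ℝ) 2 :=
  LinearMap.mkContinuous
    { toFun := fun h => (⟨fun i => ⟪h, y i⟫_ℝ, aux_memlp hB hy h⟩ : lp (fun _ : ι => ℝ) 2)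
      map_add' := fun h h' => by
        apply lp.ext
        funext i
        exact inner_add_left _ _ _
      map_smul' := fun c h => by
        apply lp.ext
        funext i
        exact real_inner_smul_left _ _ _ }
    (Real.sqrt B)
    (by
      intro h
      have h2 : (0:ℝ) < (2 : ℝ≥0∞).toReal := by norm_num
      refine lp.norm_le_of_forall_sum_le h2 (by positivity) (fun F => ?_)
      have hC : (Real.sqrt B * ‖h‖) ^ (2 : ℝ≥0∞).toReal = B * ‖h‖ ^ 2 := by
        rw [ENNReal.toReal_ofNat, Real.rpow_two, mul_pow, Real.sq_sqrt hB]
      rw [hC]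
      have := aux_bessel_finset hB hy h F
      refine le_trans (le_of_eq ?_) this
      refine Finset.sum_congr rfl fun i _ => ?_
      rw [ENNReal.toReal_ofNat, Real.rpow_two, Real.norm_eq_abs, sq_abs]
      rfl)

@[simp] lemma analysisCLM_apply (y : ι → H) (B : ℝ) (hB : 0 ≤ B)
    (hy : ∀ (F : Finset ι) (c : ι → ℝ),
      ‖∑ i ∈ F, c i • y i‖ ^ 2 ≤ B * ∑ i ∈ F, c i ^ 2)
    (h : H) (i : ι) :
    analysisCLM y B hB hy h i = ⟪h, y i⟫_ℝ := rfl


end AuxiliaryForStatement7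

set_option maxHeartbeats 2000000 in
/-- **Theorem 2.1(i).** The nodal time-series partial covariances are the
entries of the inverse of the diagonal block `D_{a,a}`. -/
theorem statement_7
    {H : Type*} [NormedAddCommGroup H] [InnerProductSpace ℝ H] [CompleteSpace H]
    (p : ℕ) (hp : 1 ≤ p) (x : ℤ × Fin p → H)
    (lamInf lamSup : ℝ)
    (hInf : IsGLB (gramQuadSet x) lamInf)
    (hSup : IsLUB (gramQuadSet x) lamSup)
    (hpos : 0 < lamInf)
    (C : Ell2p p →L[ℝ] Ell2p p)
    (hC : ∀ i j : ℤ × Fin p, ⟪C (e2p p j), e2p p i⟫_ℝ = ⟪x i, x j⟫_ℝ)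
    (hCsa : ∀ u v : Ell2p p, ⟪C u, v⟫_ℝ = ⟪u, C v⟫_ℝ)
    (hlo : ∀ v : Ell2p p, lamInf * ‖v‖ ^ 2 ≤ ⟪C v, v⟫_ℝ)
    (hhi : ∀ v : Ell2p p, ⟪C v, v⟫_ℝ ≤ lamSup * ‖v‖ ^ 2)
    (D : Ell2p p →L[ℝ] Ell2p p)
    (hCD : C.comp D = ContinuousLinearMap.id ℝ (Ell2p p))
    (hDC : D.comp C = ContinuousLinearMap.id ℝ (Ell2p p))
    (a : Fin p)
    (ra : ℤ → H)
    (hra : ∀ t : ℤ, IsResidual (x '' {k : ℤ × Fin p | k.2 ≠ a}) (x (t, a)) (ra t))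
    (Daa DaaInv : Ell2Z →L[ℝ] Ell2Z)
    (hDaa : ∀ t τ : ℤ, ⟪Daa (eZ τ), eZ t⟫_ℝ = ⟪D (e2p p (τ, a)), e2p p (t, a)⟫_ℝ)
    (hInv₁ : Daa.comp DaaInv = ContinuousLinearMap.id ℝ Ell2Z)
    (hInv₂ : DaaInv.comp Daa = ContinuousLinearMap.id ℝ Ell2Z) :
    ∀ t τ : ℤ, ⟪ra t, ra τ⟫_ℝ = ⟪DaaInv (eZ τ), eZ t⟫_ℝ := by
  classical
  -- `lamSup` is nonnegative
  have hmem0 : (‖x (0, a)‖ ^ 2 : ℝ) ∈ gramQuadSet x := by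
    refine ⟨Finsupp.single (0, a) 1, ?_, ?_⟩
    · rw [Finsupp.support_single_ne_zero _ one_ne_zero]
      simp
    · rw [Finsupp.support_single_ne_zero _ one_ne_zero]
      simp
  have hB : (0 : ℝ) ≤ lamSup := le_trans (by positivity) (hSup.1 hmem0)
  -- finite Riesz upper bound for the family `x`
  have hUx : ∀ (F : Finset (ℤ × Fin p)) (c : ℤ × Fin p → ℝ),
      ‖∑ i ∈ F, c i • x i‖ ^ 2 ≤ lamSup * ∑ i ∈ F, c i ^ 2 := by
    intro F c
    set s := ∑ i ∈ F, c i ^ 2 with hs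
    have hs0 : 0 ≤ s := Finset.sum_nonneg fun i _ => sq_nonneg _
    rcases eq_or_lt_of_le hs0 with h0 | h0
    · have hzero : ∀ i ∈ F, c i = 0 := by
        intro i hi
        have h := (Finset.sum_eq_zero_iff_of_nonneg
          (fun i _ => sq_nonneg (c i))).1 h0.symm i hi
        exact pow_eq_zero_iff (two_ne_zero) |>.1 h
      have hXz : ∑ i ∈ F, c i • x i = 0 :=
        Finset.sum_eq_zero fun i hi => by rw [hzero i hi, zero_smul]
      rw [hXz, ← h0]
      simp
    · set g : ℤ × Fin p → ℝ := fun i => if i ∈ F then c i / Real.sqrt s else 0 with hg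
      have hgsupp : ∀ i, g i ≠ 0 → i ∈ F := by
        intro i hi
        by_contra hiF
        exact hi (by simp [hg, hiF])
      set v : (ℤ × Fin p) →₀ ℝ := Finsupp.onFinset F g hgsupp with hv
      have hss : (0:ℝ) < Real.sqrt s := Real.sqrt_pos.2 h0
      have hsupp : v.support ⊆ F := Finsupp.support_onFinset_subset
      have happ : ∀ i ∈ F, v i = c i / Real.sqrt s := by
        intro i hi
        simp [hv, hg, hi]
      have hsum1 : ∑ i ∈ v.support, (v i) ^ 2 = 1 := by
        rw [Finset.sum_subset hsupp (fun i _ hi => by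
          rw [Finsupp.notMem_support_iff.1 hi]; ring)]
        have hcongr : ∀ i ∈ F, (v i) ^ 2 = c i ^ 2 / s := by
          intro i hi
          rw [happ i hi, div_pow, Real.sq_sqrt hs0]
        rw [Finset.sum_congr rfl hcongr, ← Finset.sum_div, ← hs, div_self h0.ne']
      have hvec : ∑ i ∈ v.support, v i • x i = (Real.sqrt s)⁻¹ • ∑ i ∈ F, c i • x i := by
        rw [Finset.sum_subset hsupp (fun i _ hi => by
          rw [Finsupp.notMem_support_iff.1 hi, zero_smul])]
        rw [Finset.smul_sum]
        refine Finset.sum_congr rfl fun i hi => ?_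
        rw [happ i hi, smul_smul, div_eq_inv_mul]
      have hmem2 : ‖∑ i ∈ v.support, v i • x i‖ ^ 2 ∈ gramQuadSet x := ⟨v, hsum1, rfl⟩
      have hle := hSup.1 hmem2
      rw [hvec, norm_smul, mul_pow] at hle
      have hnorm : ‖(Real.sqrt s)⁻¹‖ ^ 2 = s⁻¹ := by
        rw [norm_inv, Real.norm_eq_abs, abs_of_pos hss, inv_pow, Real.sq_sqrt hs0]
      rw [hnorm] at hle
      calc ‖∑ i ∈ F, c i • x i‖ ^ 2
          = s * (s⁻¹ * ‖∑ i ∈ F, c i • x i‖ ^ 2) := by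
            field_simp
        _ ≤ s * lamSup := by
            exact mul_le_mul_of_nonneg_left hle hs0
        _ = lamSup * s := mul_comm _ _
  -- the closed span of the other nodes
  set S : Set H := x '' {k : ℤ × Fin p | k.2 ≠ a} with hSdef
  set K : Submodule ℝ H := (Submodule.span ℝ S).topologicalClosure with hKdef
  haveI : CompleteSpace K := (Submodule.isClosed_topologicalClosure _).completeSpace_coe
  have hraO : ∀ t : ℤ, ra t ∈ Kᗮ := fun t => aux_mem_orth_closure_span (hra t).2
  have hraK : ∀ t : ℤ, x (t, a) - ra t ∈ K := fun t => (hra t).1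
  have hxK : ∀ i : ℤ × Fin p, i.2 ≠ a → x i ∈ K := fun i hi =>
    Submodule.le_topologicalClosure _ (Submodule.subset_span ⟨i, hi, rfl⟩)
  -- finite Riesz upper bound for the residual family `ra`
  have hUr : ∀ (F : Finset ℤ) (c : ℤ → ℝ),
      ‖∑ t ∈ F, c t • ra t‖ ^ 2 ≤ lamSup * ∑ t ∈ F, c t ^ 2 := by
    intro F c
    set g := ∑ t ∈ F, c t • ra t with hgdef
    set X := ∑ t ∈ F, c t • x (t, a) with hXdef
    have hgO : g ∈ Kᗮ := Submodule.sum_mem _ fun t _ => Submodule.smul_mem _ _ (hraO t)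
    have hXg : X - g ∈ K := by
      rw [hXdef, hgdef, ← Finset.sum_sub_distrib]
      refine Submodule.sum_mem _ fun t _ => ?_
      rw [← smul_sub]
      exact Submodule.smul_mem _ _ (hraK t)
    have h1 : ‖g‖ ^ 2 = ⟪g, X⟫_ℝ := by
      have h0 : ⟪g, X - g⟫_ℝ = 0 :=
        Submodule.inner_left_of_mem_orthogonal hXg hgO
      rw [inner_sub_right] at h0
      rw [← real_inner_self_eq_norm_sq]
      linarith
    have hXb : ‖X‖ ^ 2 ≤ lamSup * ∑ t ∈ F, c t ^ 2 := by
      have hinj : ∀ u ∈ F, ∀ w ∈ F, (fun t : ℤ => (t, a)) u = (fun t : ℤ => (t, a)) w → u = w :=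
        fun u _ w _ h => congrArg Prod.fst h
      have h2 := hUx (F.image (fun t => (t, a))) (fun i => c i.1)
      rw [Finset.sum_image hinj, Finset.sum_image hinj] at h2
      exact h2
    rcases eq_or_lt_of_le (norm_nonneg g) with hg0 | hg0
    · rw [← hg0]
      have hsum0 : (0:ℝ) ≤ ∑ t ∈ F, c t ^ 2 := Finset.sum_nonneg fun t _ => sq_nonneg _
      simpa using mul_nonneg hB hsum0
    · have h2 : ‖g‖ * ‖g‖ ≤ ‖g‖ * ‖X‖ := by
        have := real_inner_le_norm g X
        calc ‖g‖ * ‖g‖ = ‖g‖ ^ 2 := (sq ‖g‖).symm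
          _ = ⟪g, X⟫_ℝ := h1
          _ ≤ ‖g‖ * ‖X‖ := real_inner_le_norm g X
      have h3 : ‖g‖ ≤ ‖X‖ := le_of_mul_le_mul_left h2 hg0
      calc ‖g‖ ^ 2 ≤ ‖X‖ ^ 2 := by
            exact pow_le_pow_left₀ (norm_nonneg g) h3 2
        _ ≤ lamSup * ∑ t ∈ F, c t ^ 2 := hXb
  -- analysis operators and their adjoints
  set Sx : H →L[ℝ] Ell2p p := analysisCLM x lamSup hB hUx with hSxdef
  set Ar : H →L[ℝ] Ell2Z := analysisCLM ra lamSup hB hUr with hArdef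
  set Φ : Ell2p p →L[ℝ] H := ContinuousLinearMap.adjoint Sx with hΦdef
  set T : Ell2Z →L[ℝ] H := ContinuousLinearMap.adjoint Ar with hTdef
  -- coordinates via inner products with singles
  have hcoordZ : ∀ (v : Ell2Z) (t : ℤ), ⟪v, eZ t⟫_ℝ = v t := by
    intro v t
    rw [eZ, lp.inner_single_right]
    simp [RCLike.inner_apply, starRingEnd_apply]
  have hcoordZ' : ∀ (v : Ell2Z) (t : ℤ), ⟪eZ t, v⟫_ℝ = v t := by
    intro v t
    rw [eZ, lp.inner_single_left]
    simp [RCLike.inner_apply, starRingEnd_apply]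
  have hcoordP : ∀ (v : Ell2p p) (i : ℤ × Fin p), ⟪v, e2p p i⟫_ℝ = v i := by
    intro v i
    rw [e2p, lp.inner_single_right]
    simp [RCLike.inner_apply, starRingEnd_apply]
  have hcoordP' : ∀ (v : Ell2p p) (i : ℤ × Fin p), ⟪e2p p i, v⟫_ℝ = v i := by
    intro v i
    rw [e2p, lp.inner_single_left]
    simp [RCLike.inner_apply, starRingEnd_apply]
  -- inner products on the sequence spaces as sums
  have hinnerP : ∀ u v : Ell2p p, ⟪u, v⟫_ℝ = ∑' j, u j * v j := by
    intro u v
    rw [lp.inner_eq_tsum]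
    exact tsum_congr fun j => by simp [RCLike.inner_apply, starRingEnd_apply, mul_comm]
  have hinnerZ : ∀ u v : Ell2Z, ⟪u, v⟫_ℝ = ∑' j, u j * v j := by
    intro u v
    rw [lp.inner_eq_tsum]
    exact tsum_congr fun j => by simp [RCLike.inner_apply, starRingEnd_apply, mul_comm]
  have hTsingle : ∀ t : ℤ, T (eZ t) = ra t := by
    intro t
    refine ext_inner_right ℝ fun h => ?_
    rw [hTdef, ContinuousLinearMap.adjoint_inner_left, hcoordZ']
    rw [hArdef, analysisCLM_apply]
    exact (real_inner_comm _ _).symm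
  -- the coordinates of `C u`
  have hCcoord : ∀ (u : Ell2p p) (i : ℤ × Fin p),
      (C u) i = ∑' j, u j * ⟪x i, x j⟫_ℝ := by
    intro u i
    have hsum : HasSum (fun j : ℤ × Fin p => lp.single 2 j (u j)) u :=
      lp.hasSum_single ENNReal.ofNat_ne_top u
    have h2 : HasSum (fun j : ℤ × Fin p => ⟪e2p p i, C (lp.single 2 j (u j))⟫_ℝ)
        ⟪e2p p i, C u⟫_ℝ := by
      exact ((innerSL ℝ (e2p p i)).comp C).hasSum hsum
    have h3 : ∀ j : ℤ × Fin p, ⟪e2p p i, C (lp.single 2 j (u j))⟫_ℝ = u j * ⟪x i, x j⟫_ℝ := by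
      intro j
      have hsm : lp.single (E := fun _ : ℤ × Fin p => ℝ) 2 j (u j) = u j • e2p p j := by
        rw [e2p, ← lp.single_smul, smul_eq_mul, mul_one]
      rw [hsm, map_smul, real_inner_smul_right, real_inner_comm, hC]
    rw [← hcoordP' (C u) i, ← h2.tsum_eq]
    exact tsum_congr h3
  have hPhix : ∀ (u : Ell2p p) (i : ℤ × Fin p),
      ⟪Φ u, x i⟫_ℝ = ∑' j, u j * ⟪x i, x j⟫_ℝ := by
    intro u i
    rw [hΦdef, ContinuousLinearMap.adjoint_inner_left, hinnerP]
    exact tsum_congr fun j => by rw [hSxdef, analysisCLM_apply]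
  -- C (D e) = e
  have happD : ∀ σ : ℤ, C (D (e2p p (σ, a))) = e2p p (σ, a) := by
    intro σ
    have h := congrArg (fun L : Ell2p p →L[ℝ] Ell2p p => L (e2p p (σ, a))) hCD
    simpa using h
  -- inner products of z_σ := Φ (D e_{(σ,a)}) with the x's
  have hzx : ∀ (σ : ℤ) (i : ℤ × Fin p),
      ⟪Φ (D (e2p p (σ, a))), x i⟫_ℝ = (e2p p (σ, a)) i := by
    intro σ i
    rw [hPhix, ← hCcoord, happD]
  have hzO : ∀ σ : ℤ, Φ (D (e2p p (σ, a))) ∈ Kᗮ := by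
    intro σ
    rw [hKdef]
    apply aux_mem_orth_closure_span
    rintro s ⟨i, hi, rfl⟩
    rw [hzx]
    rw [e2p]
    exact lp.single_apply_ne 2 _ _ (by
      intro h
      exact hi (by rw [h]))
  have hzr : ∀ σ t : ℤ,
      ⟪Φ (D (e2p p (σ, a))), ra t⟫_ℝ = if t = σ then 1 else 0 := by
    intro σ t
    have h0 : ⟪Φ (D (e2p p (σ, a))), x (t, a) - ra t⟫_ℝ = 0 :=
      Submodule.inner_left_of_mem_orthogonal (hraK t) (hzO σ)
    rw [inner_sub_right] at h0
    have h1 : ⟪Φ (D (e2p p (σ, a))), ra t⟫_ℝ = (e2p p (σ, a)) (t, a) := by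
      rw [← hzx σ (t, a)]
      linarith
    rw [h1, e2p]
    by_cases h : t = σ
    · subst h
      rw [if_pos rfl]
      exact lp.single_apply_self 2 _ _
    · rw [if_neg h]
      exact lp.single_apply_ne 2 _ _ (by
        intro hh
        exact h (congrArg Prod.fst hh))
  -- the a-block coordinates of D agree with Daa
  have hwd : ∀ σ s : ℤ, (Daa (eZ σ)) s = (D (e2p p (σ, a))) (s, a) := by
    intro σ s
    rw [← hcoordZ (Daa (eZ σ)) s, hDaa, hcoordP]
  -- T (Daa e_σ) = Φ (D e_{(σ,a)})
  have hTz : ∀ σ : ℤ, T (Daa (eZ σ)) = Φ (D (e2p p (σ, a))) := by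
    intro σ
    set w : Ell2Z := Daa (eZ σ) with hwdef
    set z : H := Φ (D (e2p p (σ, a))) with hzdef
    have hTw : ∀ h : H, ⟪T w, h⟫_ℝ = ∑' s : ℤ, w s * ⟪h, ra s⟫_ℝ := by
      intro h
      rw [hTdef, ContinuousLinearMap.adjoint_inner_left, hinnerZ]
      exact tsum_congr fun s => by rw [hArdef, analysisCLM_apply]
    have hzh : ∀ h : H, ⟪z, h⟫_ℝ = ∑' j : ℤ × Fin p, (D (e2p p (σ, a))) j * ⟪h, x j⟫_ℝ := by
      intro h
      rw [hzdef, hΦdef, ContinuousLinearMap.adjoint_inner_left, hinnerP]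
      exact tsum_congr fun j => by rw [hSxdef, analysisCLM_apply]
    have hcaseK : ∀ h ∈ K, ⟪T w, h⟫_ℝ = ⟪z, h⟫_ℝ := by
      intro h hh
      have hl : ⟪T w, h⟫_ℝ = 0 := by
        rw [hTw]
        have : ∀ s : ℤ, w s * ⟪h, ra s⟫_ℝ = 0 := fun s => by
          rw [Submodule.inner_right_of_mem_orthogonal hh (hraO s), mul_zero]
        rw [tsum_congr this, tsum_zero]
      have hr : ⟪z, h⟫_ℝ = 0 :=
        Submodule.inner_left_of_mem_orthogonal hh (hzO σ)
      rw [hl, hr]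
    have hcaseO : ∀ h ∈ Kᗮ, ⟪T w, h⟫_ℝ = ⟪z, h⟫_ℝ := by
      intro h hh
      rw [hTw, hzh]
      have hinj : Function.Injective (fun s : ℤ => ((s, a) : ℤ × Fin p)) :=
        fun u v huv => congrArg Prod.fst huv
      have hsupp : Function.support
          (fun j : ℤ × Fin p => (D (e2p p (σ, a))) j * ⟪h, x j⟫_ℝ) ⊆
          Set.range (fun s : ℤ => ((s, a) : ℤ × Fin p)) := by
        intro j hj
        by_contra hjr
        apply hj
        have hja : j.2 ≠ a := by
          intro hja
          exact hjr ⟨j.1, by rw [← hja]⟩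
        have hz0 : ⟪h, x j⟫_ℝ = 0 :=
          Submodule.inner_left_of_mem_orthogonal (hxK j hja) hh
        show (D (e2p p (σ, a))) j * ⟪h, x j⟫_ℝ = 0
        rw [hz0, mul_zero]
      have hre := hinj.tsum_eq (f := fun j : ℤ × Fin p =>
        (D (e2p p (σ, a))) j * ⟪h, x j⟫_ℝ) hsupp
      rw [← hre]
      refine tsum_congr fun s => ?_
      show (Daa (eZ σ)) s * ⟪h, ra s⟫_ℝ = (D (e2p p (σ, a))) (s, a) * ⟪h, x (s, a)⟫_ℝ
      have hxr : ⟪h, x (s, a)⟫_ℝ = ⟪h, ra s⟫_ℝ := by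
        have h0 : ⟪h, x (s, a) - ra s⟫_ℝ =
          0 := Submodule.inner_left_of_mem_orthogonal (hraK s) hh
        rw [inner_sub_right] at h0
        linarith
      rw [hwd σ s, hxr]
    refine ext_inner_right ℝ fun h => ?_
    have hh : h ∈ K ⊔ Kᗮ := by
      rw [Submodule.sup_orthogonal_of_hasOrthogonalProjection]
      exact Submodule.mem_top
    obtain ⟨u, hu, v, hv, rfl⟩ := Submodule.mem_sup.1 hh
    rw [inner_add_right, inner_add_right, hcaseK u hu, hcaseO v hv]
  -- Ar (Φ (D e_{(σ,a)})) = e_σ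
  have hArz : ∀ σ : ℤ, Ar (Φ (D (e2p p (σ, a)))) = eZ σ := by
    intro σ
    apply lp.ext
    funext t
    rw [hArdef]
    rw [analysisCLM_apply]
    rw [hzr σ t, eZ]
    by_cases h : t = σ
    · subst h
      rw [if_pos rfl]
      exact (lp.single_apply_self (E := fun _ : ℤ => ℝ) 2 _ 1).symm
    · rw [if_neg h]
      exact (lp.single_apply_ne (E := fun _ : ℤ => ℝ) 2 _ 1 h).symm
  have hkey : ∀ σ : ℤ, Ar (T (Daa (eZ σ))) = eZ σ := by
    intro σ
    rw [hTz σ, hArz σ]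
  -- the composition Ar ∘ T ∘ Daa is the identity
  have hmain : ∀ u : Ell2Z, Ar (T (Daa u)) = u := by
    intro u
    have hsum : HasSum (fun s : ℤ => lp.single 2 s (u s)) u :=
      lp.hasSum_single ENNReal.ofNat_ne_top u
    have hL1 : HasSum (fun s : ℤ => Daa (lp.single 2 s (u s))) (Daa u) :=
      Daa.hasSum hsum
    have hL2 : HasSum (fun s : ℤ => T (Daa (lp.single 2 s (u s)))) (T (Daa u)) :=
      T.hasSum hL1
    have hL : HasSum (fun s : ℤ => Ar (T (Daa (lp.single 2 s (u s)))))
        (Ar (T (Daa u))) :=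
      Ar.hasSum hL2
    have hterm : ∀ s : ℤ, Ar (T (Daa (lp.single 2 s (u s)))) = lp.single 2 s (u s) := by
      intro s
      have h1 : lp.single (E := fun _ : ℤ => ℝ) 2 s (u s) = u s • eZ s := by
        rw [eZ, ← lp.single_smul, smul_eq_mul, mul_one]
      rw [h1, map_smul, map_smul, map_smul, hkey s]
    simp only [hterm] at hL
    exact hL.unique hsum
  -- conclusion
  intro t τ
  have h1 : Daa (DaaInv (eZ τ)) = eZ τ := by
    have h := congrArg (fun L : Ell2Z →L[ℝ] Ell2Z => L (eZ τ)) hInv₁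
    simpa using h
  have h2 : DaaInv (eZ τ) = Ar (ra τ) := by
    have h := hmain (DaaInv (eZ τ))
    rw [h1, hTsingle] at h
    exact h.symm
  rw [h2, hcoordZ, hArdef, analysisCLM_apply]
  exact real_inner_comm _ _
end
end

section
/- (Theorem 2.2(i).) Under Assumption 2.1, fix 1 ≤ a, b ≤ p with a ≠ b and let P_{ab} be the orthogonal projection onto the closed linear span of {x_{(s,c)} : s ∈ ℤ, c ∉ {a,b}}. Then the block D_{a,b} of the inverse Gram operator is the zero operator if and only if ⟨x_{(t,a)} − P_{ab} x_{(t,a)}, x_{(τ,b)} − P_{ab} x_{(τ,b)}⟩ = 0 for all t, τ ∈ ℤ. -/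
open scoped InnerProductSpace

noncomputable section

section Helpers

variable {H : Type*} [NormedAddCommGroup H] [InnerProductSpace ℝ H]

lemma orth_closure {S : Set H} {w : H} (h : ∀ u ∈ S, ⟪w, u⟫_ℝ = 0) :
    ∀ z ∈ (Submodule.span ℝ S).topologicalClosure, ⟪w, z⟫_ℝ = 0 := by
  intro z hz
  have hle0 : Submodule.span ℝ S ≤ (Submodule.span ℝ {w})ᗮ := by
    rw [Submodule.span_le]
    intro u hu
    rw [SetLike.mem_coe, Submodule.mem_orthogonal']
    intro v hv
    obtain ⟨c, rfl⟩ := Submodule.mem_span_singleton.mp hv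
    rw [real_inner_smul_right, real_inner_comm, h u hu, mul_zero]
  have hle : (Submodule.span ℝ S).topologicalClosure ≤ (Submodule.span ℝ {w})ᗮ :=
    Submodule.topologicalClosure_minimal _ hle0 (Submodule.span ℝ {w}).isClosed_orthogonal
  have hz' := hle hz
  have := (Submodule.mem_orthogonal' _ _).mp hz' w (Submodule.mem_span_singleton_self w)
  rwa [real_inner_comm] at this

lemma orth_closure₂ {A B : Set H} (h : ∀ u ∈ A, ∀ v ∈ B, ⟪u, v⟫_ℝ = 0) :
    ∀ z ∈ (Submodule.span ℝ A).topologicalClosure,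
    ∀ z' ∈ (Submodule.span ℝ B).topologicalClosure, ⟪z, z'⟫_ℝ = 0 := by
  intro z hz z' hz'
  refine orth_closure (fun u hu => ?_) z' hz'
  have : ∀ v ∈ A, ⟪u, v⟫_ℝ = 0 := fun v hv => by
    rw [real_inner_comm]; exact h v hv u hu
  rw [real_inner_comm]
  exact orth_closure this z hz

lemma hasSum_mem_closure {ι : Type*} {g : ι → H} {w : H} {P : Submodule ℝ H}
    (hg : HasSum g w) (h : ∀ i, g i ∈ P) : w ∈ P.topologicalClosure := by
  have : w ∈ closure (P : Set H) :=
    mem_closure_of_tendsto hg (Filter.Eventually.of_forall fun s =>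
      Submodule.sum_mem _ fun i _ => h i)
  exact this

lemma clm_maps_closure_span (f : H →L[ℝ] H) {A : Set H} {P : Submodule ℝ H}
    (h : ∀ u ∈ A, f u ∈ P.topologicalClosure) {z : H}
    (hz : z ∈ (Submodule.span ℝ A).topologicalClosure) : f z ∈ P.topologicalClosure := by
  have h1 : ∀ u ∈ Submodule.span ℝ A, f u ∈ P.topologicalClosure := by
    intro u hu
    induction hu using Submodule.span_induction with
    | mem u hu => exact h _ hu
    | zero => simp
    | add u v _ _ hu hv => rw [map_add]; exact Submodule.add_mem _ hu hv
    | smul c u _ hu => rw [map_smul]; exact Submodule.smul_mem _ _ hu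
  have h2 : z ∈ closure (Submodule.span ℝ A : Set H) := hz
  have h3 : f z ∈ closure (f '' (Submodule.span ℝ A : Set H)) :=
    map_mem_closure f.continuous h2 (fun u hu => Set.mem_image_of_mem f hu)
  have h4 : closure (f '' (Submodule.span ℝ A : Set H))
      ⊆ closure (P.topologicalClosure : Set H) := by
    apply closure_mono
    rintro _ ⟨u, hu, rfl⟩
    exact h1 u hu
  have h5 := h4 h3
  rwa [closure_eq_iff_isClosed.mpr P.isClosed_topologicalClosure] at h5

end Helpers

set_option maxHeartbeats 1000000 in
/-- **Theorem 2.2(i).** `D_{a,b} = 0` iff all the time-series partial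
covariances between the residual series of components `a` and `b` vanish. -/
theorem statement_9
    {H : Type*} [NormedAddCommGroup H] [InnerProductSpace ℝ H] [CompleteSpace H]
    (p : ℕ) (hp : 1 ≤ p) (x : ℤ × Fin p → H)
    (lamInf lamSup : ℝ)
    (hInf : IsGLB (gramQuadSet x) lamInf)
    (hSup : IsLUB (gramQuadSet x) lamSup)
    (hpos : 0 < lamInf)
    (C : Ell2p p →L[ℝ] Ell2p p)
    (hC : ∀ i j : ℤ × Fin p, ⟪C (e2p p j), e2p p i⟫_ℝ = ⟪x i, x j⟫_ℝ)
    (hCsa : ∀ u v : Ell2p p, ⟪C u, v⟫_ℝ = ⟪u, C v⟫_ℝ)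
    (hlo : ∀ v : Ell2p p, lamInf * ‖v‖ ^ 2 ≤ ⟪C v, v⟫_ℝ)
    (hhi : ∀ v : Ell2p p, ⟪C v, v⟫_ℝ ≤ lamSup * ‖v‖ ^ 2)
    (D : Ell2p p →L[ℝ] Ell2p p)
    (hCD : C.comp D = ContinuousLinearMap.id ℝ (Ell2p p))
    (hDC : D.comp C = ContinuousLinearMap.id ℝ (Ell2p p))
    (a b : Fin p) (hab : a ≠ b)
    (ra rb : ℤ → H)
    (hra : ∀ t : ℤ,
        IsResidual (x '' {k : ℤ × Fin p | k.2 ≠ a ∧ k.2 ≠ b}) (x (t, a)) (ra t))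
    (hrb : ∀ t : ℤ,
        IsResidual (x '' {k : ℤ × Fin p | k.2 ≠ a ∧ k.2 ≠ b}) (x (t, b)) (rb t)) :
    (∀ t τ : ℤ, ⟪D (e2p p (τ, b)), e2p p (t, a)⟫_ℝ = 0) ↔
    (∀ t τ : ℤ, ⟪ra t, rb τ⟫_ℝ = 0) := by
  classical
  set S : Set (ℤ × Fin p) := {k : ℤ × Fin p | k.2 ≠ a ∧ k.2 ≠ b} with hSdef
  -- orthonormality of the singles
  have hd : ∀ i j : ℤ × Fin p, ⟪e2p p i, e2p p j⟫_ℝ = if i = j then 1 else 0 := by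
    intro i j
    rw [e2p, e2p, lp.inner_single_left]
    by_cases h : i = j
    · subst h
      rw [lp.single_apply_self]
      simp
    · rw [lp.single_apply_ne 2 j 1 h]
      simp [h]
  have horthE : Orthonormal ℝ (e2p p) := by
    rw [orthonormal_iff_ite]
    exact hd
  -- quadratic form identity on finite combinations
  have hCsum : ∀ (c : ℤ × Fin p → ℝ) (F : Finset (ℤ × Fin p)),
      ⟪C (∑ i ∈ F, c i • e2p p i), ∑ i ∈ F, c i • e2p p i⟫_ℝ
        = ‖∑ i ∈ F, c i • x i‖ ^ 2 := by
    intro c F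
    rw [← real_inner_self_eq_norm_sq]
    simp only [map_sum, map_smul, sum_inner, inner_sum, real_inner_smul_left,
      real_inner_smul_right]
    refine Finset.sum_congr rfl fun i _ => Finset.sum_congr rfl fun j _ => ?_
    rw [hC i j, real_inner_comm (x j) (x i)]
  -- lamSup is positive
  have hsup_pos : 0 < lamSup := by
    have h1 := hlo (e2p p (0, ⟨0, hp⟩))
    have h2 := hhi (e2p p (0, ⟨0, hp⟩))
    have h3 : ‖e2p p (0, ⟨0, hp⟩)‖ ^ 2 = 1 := by
      rw [← real_inner_self_eq_norm_sq, hd, if_pos rfl]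
    rw [h3] at h1 h2
    nlinarith
  -- summability of the coefficient combinations
  have hsum : ∀ u : Ell2p p, Summable fun i => (u i : ℝ) • x i := by
    intro u
    have husq : Summable fun i => ⟪(u i : ℝ), (u i : ℝ)⟫_ℝ := lp.summable_inner u u
    rw [summable_iff_vanishing]
    intro e he
    obtain ⟨ε, hε, hball⟩ := Metric.mem_nhds_iff.mp he
    obtain ⟨s, hs⟩ := husq.vanishing
      (Metric.ball_mem_nhds 0 (show (0:ℝ) < ε ^ 2 / lamSup by positivity))
    refine ⟨s, fun F hF => ?_⟩
    apply hball
    rw [Metric.mem_ball, dist_zero_right]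
    have h1 := (hCsum (fun i => u i) F).symm
    have h2 := hhi (∑ i ∈ F, (u i : ℝ) • e2p p i)
    have h3 : ‖∑ i ∈ F, (u i : ℝ) • e2p p i‖ ^ 2 = ∑ i ∈ F, (u i : ℝ) * (u i : ℝ) := by
      rw [← real_inner_self_eq_norm_sq, horthE.inner_sum]
      simp [conj_trivial]
    have h4 := hs F hF
    rw [Metric.mem_ball, dist_zero_right] at h4
    have h5 : ∑ i ∈ F, ⟪(u i : ℝ), (u i : ℝ)⟫_ℝ = ∑ i ∈ F, (u i : ℝ) * (u i : ℝ) := by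
      refine Finset.sum_congr rfl fun i _ => ?_
      simp [real_inner_comm]
      ring
    rw [Real.norm_eq_abs] at h4
    have h6 : ∑ i ∈ F, (u i : ℝ) * (u i : ℝ) < ε ^ 2 / lamSup := by
      rw [h5] at h4
      exact lt_of_abs_lt h4
    have h7 : ‖∑ i ∈ F, (u i : ℝ) • x i‖ ^ 2 < ε ^ 2 := by
      rw [h1] at *
      calc ⟪C (∑ i ∈ F, (u i : ℝ) • e2p p i), ∑ i ∈ F, (u i : ℝ) • e2p p i⟫_ℝ
          ≤ lamSup * ‖∑ i ∈ F, (u i : ℝ) • e2p p i‖ ^ 2 := h2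
        _ = lamSup * ∑ i ∈ F, (u i : ℝ) * (u i : ℝ) := by rw [h3]
        _ < lamSup * (ε ^ 2 / lamSup) := by
            exact mul_lt_mul_of_pos_left h6 hsup_pos
        _ = ε ^ 2 := by field_simp
    nlinarith [norm_nonneg (∑ i ∈ F, (u i : ℝ) • x i), h7]
  -- the synthesis operator
  set Tfun : Ell2p p → H := fun u => ∑' i, (u i : ℝ) • x i with hTfun
  have hTsum : ∀ u : Ell2p p, HasSum (fun i => (u i : ℝ) • x i) (Tfun u) :=
    fun u => (hsum u).hasSum
  have hTadd : ∀ u v : Ell2p p, Tfun (u + v) = Tfun u + Tfun v := by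
    intro u v
    refine HasSum.unique (hTsum _) ?_
    have h0 : (fun i => ((u + v) i : ℝ) • x i)
        = fun i => (u i : ℝ) • x i + (v i : ℝ) • x i := by
      funext i
      rw [lp.coeFn_add, Pi.add_apply, add_smul]
    rw [h0]
    exact (hTsum u).add (hTsum v)
  have hTsmul : ∀ (c : ℝ) (u : Ell2p p), Tfun (c • u) = c • Tfun u := by
    intro c u
    refine HasSum.unique (hTsum _) ?_
    have h0 : (fun i => ((c • u) i : ℝ) • x i) = fun i => c • ((u i : ℝ) • x i) := by
      funext i
      rw [lp.coeFn_smul, Pi.smul_apply, smul_smul, smul_eq_mul]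
    rw [h0]
    exact (hTsum u).const_smul c
  have hTsingle : ∀ i, Tfun (e2p p i) = x i := by
    intro i
    refine HasSum.unique (hTsum _) ?_
    have h0 : (fun j => ((e2p p i) j : ℝ) • x j) = fun j => if j = i then x i else 0 := by
      funext j
      by_cases h : j = i
      · subst h
        rw [e2p, lp.single_apply_self, if_pos rfl, one_smul]
      · rw [e2p, lp.single_apply_ne 2 i 1 h, if_neg h, zero_smul]
    rw [h0]
    exact hasSum_ite_eq i (x i)
  have hCapply : ∀ (f : Ell2p p) (j : ℤ × Fin p), ⟪f, e2p p j⟫_ℝ = (f j : ℝ) := by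
    intro f j
    rw [e2p, lp.inner_single_right]
    simp
  have hTx : ∀ (u : Ell2p p) (j : ℤ × Fin p), ⟪Tfun u, x j⟫_ℝ = ⟪C u, e2p p j⟫_ℝ := by
    intro u j
    have h1 : HasSum (fun i => ⟪x j, (u i : ℝ) • x i⟫_ℝ) ⟪x j, Tfun u⟫_ℝ :=
      (hTsum u).mapL (innerSL ℝ (x j))
    have h2 : HasSum (fun i => ⟪(u i : ℝ), ((C (e2p p j)) i : ℝ)⟫_ℝ) ⟪u, C (e2p p j)⟫_ℝ :=
      lp.hasSum_inner u (C (e2p p j))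
    have h3 : (fun i => ⟪x j, (u i : ℝ) • x i⟫_ℝ)
        = fun i => ⟪(u i : ℝ), ((C (e2p p j)) i : ℝ)⟫_ℝ := by
      funext i
      rw [real_inner_smul_right, ← hCapply (C (e2p p j)) i, hC i j,
        real_inner_comm (x j) (x i)]
      simp [real_inner_comm]
      ring
    rw [h3] at h1
    have h4 : ⟪x j, Tfun u⟫_ℝ = ⟪u, C (e2p p j)⟫_ℝ := h1.unique h2
    exact (real_inner_comm (x j) (Tfun u)).trans (h4.trans (hCsa u (e2p p j)).symm)
  have hTT : ∀ u v : Ell2p p, ⟪Tfun u, Tfun v⟫_ℝ = ⟪C u, v⟫_ℝ := by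
    intro u v
    have h1 : HasSum (fun j => ⟪Tfun u, (v j : ℝ) • x j⟫_ℝ) ⟪Tfun u, Tfun v⟫_ℝ :=
      (hTsum v).mapL (innerSL ℝ (Tfun u))
    have h2 : HasSum (fun j => ⟪(v j : ℝ), ((C u) j : ℝ)⟫_ℝ) ⟪v, C u⟫_ℝ :=
      lp.hasSum_inner v (C u)
    have h3 : (fun j => ⟪Tfun u, (v j : ℝ) • x j⟫_ℝ)
        = fun j => ⟪(v j : ℝ), ((C u) j : ℝ)⟫_ℝ := by
      funext j
      rw [real_inner_smul_right, hTx u j, hCapply]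
      simp [real_inner_comm]
      ring
    rw [h3] at h1
    rw [h1.unique h2, real_inner_comm]
  have hTnormsq : ∀ u : Ell2p p, ‖Tfun u‖ ^ 2 = ⟪C u, u⟫_ℝ := by
    intro u
    rw [← real_inner_self_eq_norm_sq, hTT]
  have hTbound : ∀ u : Ell2p p, ‖Tfun u‖ ≤ Real.sqrt lamSup * ‖u‖ := by
    intro u
    have h1 : ‖Tfun u‖ ^ 2 ≤ lamSup * ‖u‖ ^ 2 := by
      rw [hTnormsq]; exact hhi u
    nlinarith [norm_nonneg (Tfun u), norm_nonneg u, Real.sq_sqrt hsup_pos.le,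
      Real.sqrt_nonneg lamSup, sq_nonneg (‖Tfun u‖ - Real.sqrt lamSup * ‖u‖),
      mul_nonneg (Real.sqrt_nonneg lamSup) (norm_nonneg u)]
  set Tlin : Ell2p p →ₗ[ℝ] H :=
    { toFun := Tfun, map_add' := hTadd, map_smul' := hTsmul } with hTlin
  set T : Ell2p p →L[ℝ] H := Tlin.mkContinuous (Real.sqrt lamSup) hTbound with hT
  have hTapp : ∀ u : Ell2p p, T u = Tfun u := fun u => by
    rw [hT, LinearMap.mkContinuous_apply, hTlin]
    rfl
  -- T is bounded below, hence has closed range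
  have hKpos : (0:ℝ) < (Real.sqrt lamInf)⁻¹ := by positivity
  have hTlow : ∀ u : Ell2p p, ‖u‖ ≤ ((Real.sqrt lamInf)⁻¹).toNNReal * ‖T u‖ := by
    intro u
    rw [Real.coe_toNNReal _ hKpos.le, hTapp]
    have h1 : lamInf * ‖u‖ ^ 2 ≤ ‖Tfun u‖ ^ 2 := by
      rw [hTnormsq]; exact hlo u
    have h2 : Real.sqrt lamInf * ‖u‖ ≤ ‖Tfun u‖ := by
      nlinarith [norm_nonneg (Tfun u), norm_nonneg u, Real.sq_sqrt hpos.le,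
        Real.sqrt_nonneg lamInf, mul_nonneg (Real.sqrt_nonneg lamInf) (norm_nonneg u)]
    rw [inv_mul_eq_div, le_div_iff₀ (Real.sqrt_pos.mpr hpos)]
    linarith [h2]
  have hclosed : IsClosed (Set.range T) :=
    (T.antilipschitz_of_bound hTlow).isClosed_range T.uniformContinuous
  -- range of Tfun lies in the closed span of the x's
  have hTmemX : ∀ u : Ell2p p,
      Tfun u ∈ (Submodule.span ℝ (Set.range x)).topologicalClosure :=
    fun u => hasSum_mem_closure (hTsum u)
      (fun i => Submodule.smul_mem _ _ (Submodule.subset_span ⟨i, rfl⟩))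
  -- the dual family y
  set y : ℤ × Fin p → H := fun i => Tfun (D (e2p p i)) with hy
  have hCDapply : ∀ v : Ell2p p, C (D v) = v := by
    intro v
    have := ContinuousLinearMap.ext_iff.mp hCD v
    simpa using this
  have hDCapply : ∀ v : Ell2p p, D (C v) = v := by
    intro v
    have := ContinuousLinearMap.ext_iff.mp hDC v
    simpa using this
  have hyx : ∀ i j : ℤ × Fin p, ⟪y i, x j⟫_ℝ = if i = j then 1 else 0 := by
    intro i j
    rw [hy]
    rw [hTx, hCDapply, hd]
  have hyy : ∀ i j : ℤ × Fin p, ⟪y i, y j⟫_ℝ = ⟪D (e2p p j), e2p p i⟫_ℝ := by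
    intro i j
    rw [hy]
    rw [hTT, hCDapply, real_inner_comm, hCapply, ← hCapply (D (e2p p j)) i, real_inner_comm]
  have hiff : (∀ t τ : ℤ, ⟪D (e2p p (τ, b)), e2p p (t, a)⟫_ℝ = 0)
      ↔ (∀ t τ : ℤ, ⟪y (t, a), y (τ, b)⟫_ℝ = 0) := by
    constructor <;> intro h t τ
    · rw [hyy]; exact h t τ
    · rw [← hyy]; exact h t τ
  rw [hiff]
  -- common orthogonality facts
  have hraM : ∀ s : ℤ, ∀ w ∈ (Submodule.span ℝ (x '' S)).topologicalClosure,
      ⟪ra s, w⟫_ℝ = 0 := fun s => orth_closure (hra s).2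
  have hyM : ∀ i : ℤ × Fin p, i.2 = a ∨ i.2 = b →
      ∀ w ∈ (Submodule.span ℝ (x '' S)).topologicalClosure, ⟪y i, w⟫_ℝ = 0 := by
    intro i hi
    refine orth_closure ?_
    rintro _ ⟨k, hk, rfl⟩
    rw [hyx, if_neg]
    rintro rfl
    rcases hi with h | h
    · exact hk.1 h
    · exact hk.2 h
  have hyra : ∀ (τ s : ℤ), ⟪y (τ, b), ra s⟫_ℝ = 0 := by
    intro τ s
    have hne : (τ, b) ≠ (s, a) := by
      intro h
      exact hab (congrArg Prod.snd h).symm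
    have h1 : ra s = x (s, a) - (x (s, a) - ra s) := (sub_sub_cancel _ _).symm
    rw [h1, inner_sub_right, hyx, if_neg hne, hyM (τ, b) (Or.inr rfl) _ (hra s).1, sub_zero]
  have hyrb : ∀ (t s : ℤ), ⟪y (t, a), rb s⟫_ℝ = 0 := by
    intro t s
    have hne : (t, a) ≠ (s, b) := by
      intro h
      exact hab (congrArg Prod.snd h)
    have h1 : rb s = x (s, b) - (x (s, b) - rb s) := (sub_sub_cancel _ _).symm
    rw [h1, inner_sub_right, hyx, if_neg hne, hyM (t, a) (Or.inl rfl) _ (hrb s).1, sub_zero]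
  constructor
  · -- D block zero → residuals orthogonal
    intro hyp t τ
    have hXrange : (Submodule.span ℝ (x '' S)).topologicalClosure ≤ LinearMap.range (T : Ell2p p →ₗ[ℝ] H) := by
      refine Submodule.topologicalClosure_minimal _ ?_ ?_
      · rw [Submodule.span_le]
        rintro _ ⟨k, hk, rfl⟩
        exact ⟨e2p p k, (hTapp _).trans (hTsingle k)⟩
      · rw [LinearMap.coe_range]
        exact hclosed
    have hra_range : ra t ∈ LinearMap.range (T : Ell2p p →ₗ[ℝ] H) := by
      have h1 : x (t, a) ∈ LinearMap.range (T : Ell2p p →ₗ[ℝ] H) := ⟨e2p p (t, a), (hTapp _).trans (hTsingle _)⟩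
      have h2 : x (t, a) - ra t ∈ LinearMap.range (T : Ell2p p →ₗ[ℝ] H) := hXrange (hra t).1
      have h3 := Submodule.sub_mem _ h1 h2
      rwa [sub_sub_cancel] at h3
    obtain ⟨u, hu⟩ := hra_range
    have huT : Tfun u = ra t := (hTapp u).symm.trans hu
    have hCu0 : ∀ k ∈ S, ((C u) k : ℝ) = 0 := by
      intro k hk
      rw [← hCapply (C u) k, ← hTx u k, huT]
      exact (hra t).2 _ ⟨k, hk, rfl⟩
    set v : Ell2p p := C u with hvdef
    have hDv : Tfun (D v) = ra t := by
      rw [hvdef, hDCapply, huT]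
    have hsingles : HasSum (fun k => lp.single 2 k ((v k : ℝ))) v :=
      lp.hasSum_single ENNReal.ofNat_ne_top v
    have h5 : HasSum (fun k => ((v k : ℝ)) • y k) (ra t) := by
      have h6 := hsingles.mapL (T.comp D)
      have h7 : (fun k => (T.comp D) (lp.single 2 k ((v k : ℝ))))
          = fun k => ((v k : ℝ)) • y k := by
        funext k
        rw [ContinuousLinearMap.comp_apply, hTapp]
        have h8 : lp.single 2 k ((v k : ℝ)) = (v k : ℝ) • e2p p k := by
          rw [e2p, ← lp.single_smul]
          norm_num
        rw [h8, map_smul, hTsmul, hy]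
      rw [h7] at h6
      rwa [ContinuousLinearMap.comp_apply, hTapp, hDv] at h6
    set NA := Submodule.span ℝ (y '' {k : ℤ × Fin p | k.2 = a}) with hNAdef
    set NB := Submodule.span ℝ (y '' {k : ℤ × Fin p | k.2 = b}) with hNBdef
    have hmemN : ra t ∈ (NA ⊔ NB).topologicalClosure := by
      refine hasSum_mem_closure h5 ?_
      intro k
      by_cases hk2 : k.2 = a ∨ k.2 = b
      · rcases hk2 with h | h
        · exact Submodule.smul_mem _ _
            (Submodule.mem_sup_left (Submodule.subset_span ⟨k, h, rfl⟩))
        · exact Submodule.smul_mem _ _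
            (Submodule.mem_sup_right (Submodule.subset_span ⟨k, h, rfl⟩))
      · push_neg at hk2
        rw [hCu0 k ⟨hk2.1, hk2.2⟩, zero_smul]
        exact zero_mem _
    set NB' := NB.topologicalClosure with hNB'def
    haveI : CompleteSpace NB' := NB.isClosed_topologicalClosure.completeSpace_coe
    have horthAB : ∀ u' ∈ (y '' {k : ℤ × Fin p | k.2 = a}),
        ∀ w ∈ (y '' {k : ℤ × Fin p | k.2 = b}), ⟪u', w⟫_ℝ = 0 := by
      rintro _ ⟨k, hk, rfl⟩ _ ⟨l, hl, rfl⟩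
      have hk' : k = (k.1, a) := Prod.ext rfl hk
      have hl' : l = (l.1, b) := Prod.ext rfl hl
      rw [hk', hl']
      exact hyp k.1 l.1
    have hNAorth : ∀ α ∈ NA, α ∈ NB'ᗮ := by
      intro α hα
      rw [Submodule.mem_orthogonal']
      intro w hw
      exact orth_closure₂ horthAB α (NA.le_topologicalClosure hα) w hw
    set f : H →L[ℝ] H :=
      ContinuousLinearMap.id ℝ H - NB'.subtypeL.comp (NB'.orthogonalProjectionOnto) with hfdef
    have hfapp : ∀ w : H, f w = w - (NB'.orthogonalProjectionOnto w : H) := by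
      intro w
      rw [hfdef]
      simp
    have h_genAB : ∀ w ∈ ((NA ⊔ NB : Submodule ℝ H) : Set H),
        f w ∈ NA.topologicalClosure := by
      intro w hw
      obtain ⟨α, hα, β, hβ, rfl⟩ := Submodule.mem_sup.mp hw
      have hproja : (NB'.orthogonalProjectionOnto α : H) = 0 := by
        rw [Submodule.orthogonalProjectionOnto_apply_of_mem_orthogonal (hNAorth α hα)]
        simp
      have hprojb : (NB'.orthogonalProjectionOnto β : H) = β :=
        Submodule.starProjection_eq_self_iff.mpr (NB.le_topologicalClosure hβ)
      have hsum' : (NB'.orthogonalProjectionOnto (α + β) : H) = β := by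
        rw [map_add, Submodule.coe_add, hproja, hprojb, zero_add]
      rw [hfapp, hsum', add_sub_cancel_right]
      exact NA.le_topologicalClosure hα
    have hraNB' : ra t ∈ NB'ᗮ := by
      rw [Submodule.mem_orthogonal']
      intro w hw
      refine orth_closure ?_ w hw
      rintro _ ⟨k, hk, rfl⟩
      have hk' : k = (k.1, b) := Prod.ext rfl hk
      rw [hk', real_inner_comm]
      exact hyra k.1 t
    have hra_in : ra t ∈ NA.topologicalClosure := by
      have h9 : ra t ∈ (Submodule.span ℝ ((NA ⊔ NB : Submodule ℝ H) : Set H)).topologicalClosure := by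
        rwa [Submodule.span_eq]
      have h10 := clm_maps_closure_span f h_genAB h9
      have h11 : f (ra t) = ra t := by
        rw [hfapp, Submodule.orthogonalProjectionOnto_apply_of_mem_orthogonal hraNB']
        simp
      rwa [h11] at h10
    have h12 : ∀ z ∈ NA.topologicalClosure, ⟪rb τ, z⟫_ℝ = 0 := by
      refine orth_closure ?_
      rintro _ ⟨k, hk, rfl⟩
      have hk' : k = (k.1, a) := Prod.ext rfl hk
      rw [hk', real_inner_comm]
      exact hyrb k.1 τ
    rw [real_inner_comm]
    exact h12 _ hra_in
  · -- residuals orthogonal → D block zero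
    intro hyp t τ
    set Sa : Set (ℤ × Fin p) := {k : ℤ × Fin p | k.2 ≠ a} with hSadef
    set V' := (Submodule.span ℝ (x '' Sa)).topologicalClosure with hV'def
    haveI : CompleteSpace V' :=
      (Submodule.span ℝ (x '' Sa)).isClosed_topologicalClosure.completeSpace_coe
    have hMleV : (Submodule.span ℝ (x '' S)).topologicalClosure ≤ V' := by
      refine Submodule.topologicalClosure_mono (Submodule.span_mono (Set.image_mono ?_))
      exact fun k hk => hk.1
    have hraV : ∀ s : ℤ, ∀ w ∈ V', ⟪ra s, w⟫_ℝ = 0 := by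
      intro s
      refine orth_closure ?_
      rintro _ ⟨k, hk, rfl⟩
      by_cases hkb : k.2 = b
      · have hk' : k = (k.1, b) := Prod.ext rfl hkb
        rw [hk']
        have h1 : x (k.1, b) = rb k.1 + (x (k.1, b) - rb k.1) := by abel
        rw [h1, inner_add_right, hyp s k.1, hraM s _ (hrb k.1).1, add_zero]
      · exact (hra s).2 _ ⟨k, ⟨hk, hkb⟩, rfl⟩
    have hproj : ∀ s : ℤ, (V'.orthogonalProjectionOnto (x (s, a)) : H) = x (s, a) - ra s := by
      intro s
      refine Submodule.eq_starProjection_of_mem_of_inner_eq_zero (hMleV (hra s).1) ?_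
      intro w hw
      rw [sub_sub_cancel]
      exact hraV s w hw
    set f : H →L[ℝ] H :=
      ContinuousLinearMap.id ℝ H - V'.subtypeL.comp (V'.orthogonalProjectionOnto) with hfdef
    have hfapp : ∀ w : H, f w = w - (V'.orthogonalProjectionOnto w : H) := by
      intro w
      rw [hfdef]
      simp
    have h_gen : ∀ w ∈ Set.range x,
        f w ∈ (Submodule.span ℝ (Set.range ra)).topologicalClosure := by
      rintro _ ⟨k, rfl⟩
      by_cases hka : k.2 = a
      · have hk' : k = (k.1, a) := Prod.ext rfl hka
        rw [hk', hfapp, hproj, sub_sub_cancel]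
        exact (Submodule.span ℝ (Set.range ra)).le_topologicalClosure
          (Submodule.subset_span ⟨k.1, rfl⟩)
      · have hxk : x k ∈ V' := (Submodule.span ℝ (x '' Sa)).le_topologicalClosure
          (Submodule.subset_span ⟨k, hka, rfl⟩)
        rw [hfapp, show (V'.orthogonalProjectionOnto (x k) : H) = x k from
          Submodule.starProjection_eq_self_iff.mpr hxk, sub_self]
        exact zero_mem _
    have hytaV : y (t, a) ∈ V'ᗮ := by
      rw [Submodule.mem_orthogonal']
      intro w hw
      refine orth_closure ?_ w hw
      rintro _ ⟨k, hk, rfl⟩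
      rw [hyx, if_neg]
      rintro rfl
      exact hk rfl
    have hX : y (t, a) ∈ (Submodule.span ℝ (Set.range x)).topologicalClosure := hTmemX _
    have h10 := clm_maps_closure_span f h_gen hX
    have h11 : f (y (t, a)) = y (t, a) := by
      rw [hfapp, Submodule.orthogonalProjectionOnto_apply_of_mem_orthogonal hytaV]
      simp
    rw [h11] at h10
    have h12 : ∀ z ∈ (Submodule.span ℝ (Set.range ra)).topologicalClosure,
        ⟪y (τ, b), z⟫_ℝ = 0 := by
      refine orth_closure ?_
      rintro _ ⟨s, rfl⟩
      exact hyra τ s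
    rw [real_inner_comm]
    exact h12 _ h10

end
end
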